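/- arXiv:2107.13495 — 7 statements merged into one kernel-verified Lean document; each statement's English description precedes it below -/
import Mathlib

section
/- For each n ≥ 1 and 1 ≤ k ≤ n, the number of graphs on vertex set {1,...,n} satisfying the interval-clique property and having exactly k maximal cliques equals (1/n) · C(n,k) · C(n,k-1) (the Narayana number N(n,k)). -/
/-!
An interval-clique graph `G` is determined by its reach function `f i = max ({i} ∪ N(i))`, which is
monotone with `i ≤ f i`; conversely every such `f` gives the interval-clique graph in which `i < j`
are adjacent iff `j ≤ f i`. Its maximal cliques are the intervals `[a, f a]` where `a` is the first
point with value `f a`, so they are counted by the image of `f`.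

A monotone `f : Fin (m + 1) → Fin (m + 1)` is determined by its image and its set of ascents
`{i | f i < f (i + 1)}`. When `i ≤ f i` and the image has `p + 1` elements, the ascents `X` and the
values `V` other than `m` are two `p`-subsets of `Fin m` such that below every threshold `V` has at
most as many elements as `X` (`i ↦ f i` maps the ascents onto `V` and `i ≤ f i`); every such ballot
pair arises, from the `f` sending `i` to the `r`-th element of `V ∪ {m}`, `r` the number of ascents
below `i`. By André's reflection, the pairs violating this are equinumerous with pairs of sizes
`p - 1` and `p + 1`, so there are `C(m, p)² - C(m, p - 1) C(m, p + 1)` ballot pairs, which is the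
Narayana number `C(m + 1, p + 1) C(m + 1, p) / (m + 1)`.
-/

/-- Interval-clique property: whenever `i < j` are adjacent, `{i,...,j}` is a clique. -/
def IntervalClique {n : ℕ} (G : SimpleGraph (Fin n)) : Prop :=
  ∀ i j k l : Fin n, i < j → G.Adj i j → i ≤ k → k ≤ j → i ≤ l → l ≤ j → k ≠ l → G.Adj k l

/-- `s` is a maximal clique of `G`. -/
def IsMaxClique {n : ℕ} (G : SimpleGraph (Fin n)) (s : Finset (Fin n)) : Prop :=
  G.IsClique (s : Set (Fin n)) ∧ ∀ t : Finset (Fin n), G.IsClique (t : Set (Fin n)) → s ⊆ t → s = t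

/-- The number of maximal cliques of `G`. -/
noncomputable def numMaxCliques {n : ℕ} (G : SimpleGraph (Fin n)) : ℕ :=
  Nat.card {s : Finset (Fin n) // IsMaxClique G s}

open Finset

section Ballot

variable {N : ℕ}

def prefixCard (A : Finset (Fin N)) (t : ℕ) : ℕ := #{a ∈ A | a.val < t}

lemma prefixCard_zero (A : Finset (Fin N)) : prefixCard A 0 = 0 := by
  simp [prefixCard]

lemma prefixCard_le_card (A : Finset (Fin N)) (t : ℕ) : prefixCard A t ≤ #A :=
  card_filter_le _ _

lemma prefixCard_of_le (A : Finset (Fin N)) {t : ℕ} (h : N ≤ t) : prefixCard A t = #A := by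
  rw [prefixCard, filter_true_of_mem fun a _ => a.isLt.trans_le h]

lemma prefixCard_mono (A : Finset (Fin N)) : Monotone (prefixCard A) :=
  fun _ _ h => card_le_card fun a ha => by
    simp only [mem_filter] at ha ⊢
    exact ⟨ha.1, by omega⟩

lemma prefixCard_succ (A : Finset (Fin N)) (t : ℕ) :
    prefixCard A (t + 1) = prefixCard A t + #{a ∈ A | a.val = t} := by
  rw [prefixCard, prefixCard, ← card_union_of_disjoint (disjoint_filter.2 fun _ _ h => h.ne),
    ← filter_or]
  simp_rw [Nat.lt_succ_iff_lt_or_eq]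

lemma prefixCard_succ_le (A : Finset (Fin N)) (t : ℕ) :
    prefixCard A (t + 1) ≤ prefixCard A t + 1 := by
  rw [prefixCard_succ]
  gcongr
  exact card_le_one.2 fun a ha b hb => Fin.ext ((mem_filter.1 ha).2.trans (mem_filter.1 hb).2.symm)

lemma prefixCard_lt_succ_iff (A : Finset (Fin N)) (i : Fin N) :
    prefixCard A i < prefixCard A (i + 1) ↔ i ∈ A := by
  simp_rw [prefixCard_succ, Fin.val_inj, filter_eq', lt_add_iff_pos_right]
  split_ifs with h <;> simp [h]

lemma prefixCard_map_castSucc (A : Finset (Fin N)) (t : ℕ) :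
    prefixCard (A.map Fin.castSuccEmb) t = prefixCard A t := by
  rw [prefixCard, filter_map, card_map]
  rfl

def Ballot (X V : Finset (Fin N)) : Prop := ∀ t, prefixCard V t ≤ prefixCard X t

lemma not_ballot_iff {X V : Finset (Fin N)} :
    ¬ Ballot X V ↔ ∃ t, prefixCard X t < prefixCard V t := by
  simp [Ballot]

lemma not_ballot_of_card_lt {X V : Finset (Fin N)} (h : #X < #V) : ¬ Ballot X V := fun hB => by
  have := hB N
  rw [prefixCard_of_le X le_rfl, prefixCard_of_le V le_rfl] at this
  omega

def swapTails (X V : Finset (Fin N)) (t : ℕ) : Finset (Fin N) :=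
  {x ∈ X | x.val < t} ∪ {v ∈ V | t ≤ v.val}

lemma prefixCard_swapTails (X V : Finset (Fin N)) {s t : ℕ} (h : s ≤ t) :
    prefixCard (swapTails X V t) s = prefixCard X s := by
  unfold prefixCard swapTails
  congr 1
  ext a
  simp only [mem_filter, mem_union]
  grind

lemma swapTails_swapTails (X V : Finset (Fin N)) (t : ℕ) :
    swapTails (swapTails X V t) (swapTails V X t) t = X := by
  ext a
  simp only [swapTails, mem_filter, mem_union]
  grind

lemma card_swapTails (X V : Finset (Fin N)) (t : ℕ) :
    #(swapTails X V t) + prefixCard V t = prefixCard X t + #V := by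
  rw [swapTails, card_union_of_disjoint ?_, prefixCard, prefixCard,
    add_assoc, ← card_filter_add_card_filter_not (s := V) (fun v : Fin N => (v : ℕ) < t)]
  · simp only [not_lt]
    ring
  · refine disjoint_left.2 fun a h1 h2 => ?_
    simp only [mem_filter] at h1 h2
    omega

/-- André's reflection, at the first threshold below which `V` has more elements than `X`. -/
noncomputable def reflect (q : Finset (Fin N) × Finset (Fin N)) : Finset (Fin N) × Finset (Fin N) :=
  open Classical in
  if h : Ballot q.1 q.2 then q else
    let t := Nat.find (not_ballot_iff.1 h)
    (swapTails q.1 q.2 t, swapTails q.2 q.1 t)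

lemma prefixCard_find {X V : Finset (Fin N)} (h : ∃ t, prefixCard X t < prefixCard V t) :
    prefixCard V (Nat.find h) = prefixCard X (Nat.find h) + 1 := by
  obtain ⟨s, hs⟩ : ∃ s, Nat.find h = s + 1 :=
    Nat.exists_eq_succ_of_ne_zero fun h0 => by simpa [h0, prefixCard_zero] using Nat.find_spec h
  have hlt : prefixCard X (s + 1) < prefixCard V (s + 1) := hs ▸ Nat.find_spec h
  have hle : prefixCard V s ≤ prefixCard X s := not_lt.1 (Nat.find_min h (by omega))
  have := prefixCard_succ_le V s
  have := prefixCard_mono X (Nat.le_add_right s 1)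
  rw [hs]
  omega

section Reflect

variable {q : Finset (Fin N) × Finset (Fin N)} (h : ¬ Ballot q.1 q.2)
include h

lemma reflect_of_not_ballot :
    reflect q = (swapTails q.1 q.2 (Nat.find (not_ballot_iff.1 h)),
      swapTails q.2 q.1 (Nat.find (not_ballot_iff.1 h))) :=
  dif_neg h

lemma card_reflect_fst : #(reflect q).1 + 1 = #q.2 := by
  have := card_swapTails q.1 q.2 (Nat.find (not_ballot_iff.1 h))
  have := prefixCard_find (not_ballot_iff.1 h)
  rw [reflect_of_not_ballot h]
  dsimp only
  omega

lemma card_reflect_snd : #(reflect q).2 = #q.1 + 1 := by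
  have := card_swapTails q.2 q.1 (Nat.find (not_ballot_iff.1 h))
  have := prefixCard_find (not_ballot_iff.1 h)
  rw [reflect_of_not_ballot h]
  dsimp only
  omega

lemma not_ballot_reflect : ¬ Ballot (reflect q).1 (reflect q).2 := by
  rw [not_ballot_iff, reflect_of_not_ballot h]
  refine ⟨Nat.find (not_ballot_iff.1 h), ?_⟩
  rw [prefixCard_swapTails _ _ le_rfl, prefixCard_swapTails _ _ le_rfl]
  exact Nat.find_spec (not_ballot_iff.1 h)

lemma reflect_reflect : reflect (reflect q) = q := by
  have h' := not_ballot_reflect h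
  have ht : Nat.find (not_ballot_iff.1 h') = Nat.find (not_ballot_iff.1 h) := by
    rw [Nat.find_eq_iff]
    simp only [reflect_of_not_ballot h, prefixCard_swapTails _ _ le_rfl, not_lt]
    refine ⟨Nat.find_spec (not_ballot_iff.1 h), fun s hs => ?_⟩
    rw [prefixCard_swapTails _ _ hs.le, prefixCard_swapTails _ _ hs.le]
    exact not_lt.1 (Nat.find_min (not_ballot_iff.1 h) hs)
  rw [reflect_of_not_ballot h', ht, reflect_of_not_ballot h]
  simp [swapTails_swapTails]

end Reflect

end Ballot

open Classical in
noncomputable def ballotPairs (N p : ℕ) : Finset (Finset (Fin N) × Finset (Fin N)) :=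
  {q ∈ powersetCard p univ ×ˢ powersetCard p univ | Ballot q.1 q.2}

lemma card_ballotPairs_zero (N : ℕ) : #(ballotPairs N 0) = 1 := by
  classical
  rw [ballotPairs, filter_true_of_mem fun q hq => ?_]
  · simp
  · simp only [mem_product, mem_powersetCard_univ, card_eq_zero] at hq
    simp [Ballot, hq.2, prefixCard]

open Classical in
lemma card_not_ballot_eq (N p : ℕ) :
    #{q ∈ powersetCard (p + 1) (univ : Finset (Fin N)) ×ˢ powersetCard (p + 1) univ |
      ¬ Ballot q.1 q.2} =
      #(powersetCard p (univ : Finset (Fin N)) ×ˢ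
        powersetCard (p + 2) (univ : Finset (Fin N))) := by
  refine card_nbij' reflect reflect (fun q hq => ?_) (fun q hq => ?_)
    (fun q hq => reflect_reflect (mem_filter.1 hq).2) (fun q hq => reflect_reflect ?_)
  · simp only [mem_coe, mem_filter, mem_product, mem_powersetCard_univ] at hq ⊢
    have := card_reflect_fst hq.2
    have := card_reflect_snd hq.2
    omega
  · simp only [mem_coe, mem_product, mem_powersetCard_univ] at hq
    have hq' : ¬ Ballot q.1 q.2 := not_ballot_of_card_lt (by omega)
    simp only [mem_coe, mem_filter, mem_product, mem_powersetCard_univ]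
    have := card_reflect_fst hq'
    have := card_reflect_snd hq'
    exact ⟨⟨by omega, by omega⟩, not_ballot_reflect hq'⟩
  · simp only [mem_coe, mem_product, mem_powersetCard_univ] at hq
    exact not_ballot_of_card_lt (by omega)

lemma card_ballotPairs_succ_add (N p : ℕ) :
    #(ballotPairs N (p + 1)) + N.choose p * N.choose (p + 2) = N.choose (p + 1) ^ 2 := by
  classical
  have htotal := card_filter_add_card_filter_not
    (s := powersetCard (p + 1) (univ : Finset (Fin N)) ×ˢ powersetCard (p + 1) univ)
    (fun q => Ballot q.1 q.2)
  simp only [card_not_ballot_eq, card_product, card_powersetCard, card_univ,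
    Fintype.card_fin] at htotal
  rw [ballotPairs, sq, ← htotal]

lemma choose_sq_mul_succ (m p : ℕ) :
    m.choose (p + 1) ^ 2 * (m + 1) = (m + 1).choose (p + 2) * (m + 1).choose (p + 1) +
      m.choose p * m.choose (p + 2) * (m + 1) := by
  have e1 := Nat.add_one_mul_choose_eq m p
  have e2 := Nat.add_one_mul_choose_eq m (p + 1)
  rw [Nat.choose_succ_succ' m p] at e1 ⊢
  rw [Nat.choose_succ_succ' m (p + 1)] at e2 ⊢
  refine Nat.eq_of_mul_eq_mul_left (by omega : 0 < p + 2) ?_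
  linear_combination (m.choose p + m.choose (p + 1) + m.choose p * (m + 1)) * e2
    - m.choose (p + 1) * (m + 1) * e1

theorem card_ballotPairs_mul (m p : ℕ) :
    #(ballotPairs m p) * (m + 1) = (m + 1).choose (p + 1) * (m + 1).choose p := by
  cases p with
  | zero => simp [card_ballotPairs_zero]
  | succ p =>
    have := card_ballotPairs_succ_add m p
    have := choose_sq_mul_succ m p
    nlinarith

section Ascents

variable {α : Type*} [LinearOrder α] {m : ℕ} {f g : Fin (m + 1) → α}

def ascents (f : Fin (m + 1) → α) : Finset (Fin m) := {i | f i.castSucc < f i.succ}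

lemma mem_ascents {i : Fin m} : i ∈ ascents f ↔ f i.castSucc < f i.succ := by
  simp [ascents]

lemma Monotone.apply_succ_le_of_lt (hf : Monotone f) {i : Fin m} {j : Fin (m + 1)}
    (h : f i.castSucc < f j) : f i.succ ≤ f j :=
  hf (Fin.castSucc_lt_iff_succ_le.1 (hf.reflect_lt h))

lemma image_ascents (hf : Monotone f) :
    (ascents f).image (fun i => f i.castSucc) = (univ.image f).erase (f (Fin.last m)) := by
  ext w
  simp only [mem_image, mem_erase, mem_univ, true_and, mem_ascents]
  constructor
  · rintro ⟨i, hi, rfl⟩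
    exact ⟨(hi.trans_le (hf (Fin.le_last _))).ne, i.castSucc, rfl⟩
  · rintro ⟨hw, j, rfl⟩
    obtain ⟨k, hk, hmax⟩ := ({j' | f j' = f j} : Finset _).exists_max_image id ⟨j, by simp⟩
    simp only [mem_filter, mem_univ, true_and, id] at hk hmax
    obtain ⟨i, rfl⟩ := Fin.exists_castSucc_eq.2 fun h => hw (h ▸ hk.symm)
    refine ⟨i, lt_of_le_of_ne (hf Fin.castSucc_lt_succ.le) fun he => ?_, hk⟩
    exact (hmax i.succ (he.symm.trans hk)).not_gt Fin.castSucc_lt_succ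

lemma injOn_ascents (hf : Monotone f) : Set.InjOn (fun i : Fin m => f i.castSucc) (ascents f) :=
  StrictMonoOn.injOn fun _ hi _ _ hij =>
    (mem_ascents.1 hi).trans_le (hf (Fin.succ_le_castSucc_iff.2 hij))

lemma card_image_eq_card_ascents_add_one (hf : Monotone f) :
    #(univ.image f) = #(ascents f) + 1 := by
  rw [← card_erase_add_one (mem_image_of_mem f (mem_univ (Fin.last m))), ← image_ascents hf,
    card_image_of_injOn (injOn_ascents hf)]

lemma eq_of_image_eq_of_ascents_eq (hf : Monotone f) (hg : Monotone g)
    (himage : univ.image f = univ.image g) (hasc : ascents f = ascents g) : f = g := by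
  have hrange : Set.range f = Set.range g := by simpa [Set.ext_iff, Finset.ext_iff] using himage
  have hgf (j) : ∃ j', f j' = g j := (Set.ext_iff.1 hrange (g j)).2 ⟨j, rfl⟩
  have hfg (j) : ∃ j', g j' = f j := (Set.ext_iff.1 hrange (f j)).1 ⟨j, rfl⟩
  funext i
  induction i using Fin.induction with
  | zero =>
    obtain ⟨j, hj⟩ := hgf 0
    obtain ⟨j', hj'⟩ := hfg 0
    exact le_antisymm (hj ▸ hf (Fin.zero_le j)) (hj' ▸ hg (Fin.zero_le j'))
  | succ i ih =>
    by_cases hi : i ∈ ascents f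
    · obtain ⟨j, hj⟩ := hgf i.succ
      obtain ⟨j', hj'⟩ := hfg i.succ
      have hi' := hasc ▸ hi
      rw [mem_ascents] at hi hi'
      refine le_antisymm (hj ▸ hf.apply_succ_le_of_lt ?_) (hj' ▸ hg.apply_succ_le_of_lt ?_)
      · rwa [hj, ih]
      · rwa [hj', ← ih]
    · have hi' : i ∉ ascents g := hasc ▸ hi
      rw [mem_ascents, not_lt] at hi hi'
      rw [le_antisymm hi (hf Fin.castSucc_lt_succ.le), le_antisymm hi' (hg Fin.castSucc_lt_succ.le),
        ih]

def stepFun (X : Finset (Fin m)) (W : Finset α) (h : #W = #X + 1) (i : Fin (m + 1)) : α :=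
  W.orderEmbOfFin h ⟨prefixCard X i, Nat.lt_succ_of_le (prefixCard_le_card X i)⟩

variable {X : Finset (Fin m)} {W : Finset α} (h : #W = #X + 1)

lemma monotone_stepFun : Monotone (stepFun X W h) := fun _ _ hij =>
  (W.orderEmbOfFin h).monotone (Fin.mk_le_mk.2 (prefixCard_mono X hij))

lemma ascents_stepFun : ascents (stepFun X W h) = X := by
  ext i
  rw [mem_ascents, stepFun, stepFun, (W.orderEmbOfFin h).lt_iff_lt, Fin.mk_lt_mk, Fin.val_castSucc,
    Fin.val_succ, prefixCard_lt_succ_iff]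

lemma image_stepFun : univ.image (stepFun X W h) = W :=
  eq_of_subset_of_card_le (image_subset_iff.2 fun _ _ => W.orderEmbOfFin_mem h _)
    (by rw [card_image_eq_card_ascents_add_one (monotone_stepFun h), ascents_stepFun, h])

end Ascents

section Inflationary

variable {m : ℕ}

def insertLast (V : Finset (Fin m)) : Finset (Fin (m + 1)) :=
  insert (Fin.last m) (V.map Fin.castSuccEmb)

lemma card_insertLast (V : Finset (Fin m)) : #(insertLast V) = #V + 1 := by
  rw [insertLast, card_insert_of_notMem (by simp [Fin.castSucc_ne_last]), card_map]

lemma castSucc_mem_insertLast {V : Finset (Fin m)} {v : Fin m} :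
    v.castSucc ∈ insertLast V ↔ v ∈ V := by
  simp [insertLast, Fin.castSucc_ne_last]

lemma le_stepFun {X V : Finset (Fin m)} (hB : Ballot X V) (h : #(insertLast V) = #X + 1)
    (i : Fin (m + 1)) : i ≤ stepFun X (insertLast V) h i := by
  set e := (insertLast V).orderEmbOfFin h
  set r : Fin (#X + 1) := ⟨prefixCard X i, Nat.lt_succ_of_le (prefixCard_le_card X i)⟩
  by_contra! hlt
  have hmaps : Set.MapsTo e (Iic r) ({w ∈ V.map Fin.castSuccEmb | w.val < i.val} : Finset _) := by
    intro j hj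
    have hji : e j < i := (e.monotone (mem_Iic.1 hj)).trans_lt hlt
    have hmem : e j = Fin.last m ∨ e j ∈ V.map Fin.castSuccEmb :=
      mem_insert.1 ((insertLast V).orderEmbOfFin_mem h j)
    exact mem_coe.2 (mem_filter.2 ⟨hmem.resolve_left (hji.trans_le (Fin.le_last i)).ne, hji⟩)
  have := calc prefixCard X i + 1
    _ = #(Iic r) := (Fin.card_Iic r).symm
    _ ≤ prefixCard (V.map Fin.castSuccEmb) i := card_le_card_of_injOn e hmaps e.injective.injOn
    _ = prefixCard V i := prefixCard_map_castSucc V i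
  exact absurd (hB i) (by omega)

variable {f : Fin (m + 1) → Fin (m + 1)}

def values (f : Fin (m + 1) → Fin (m + 1)) : Finset (Fin m) := {v | v.castSucc ∈ univ.image f}

lemma map_values : (values f).map Fin.castSuccEmb = (univ.image f).erase (Fin.last m) := by
  ext w
  simp only [values, mem_map, mem_filter, mem_univ, true_and, Fin.coe_castSuccEmb, mem_erase]
  constructor
  · rintro ⟨v, hv, rfl⟩
    exact ⟨(Fin.castSucc_lt_last v).ne, hv⟩
  · rintro ⟨hw, hw'⟩
    obtain ⟨v, rfl⟩ := Fin.exists_castSucc_eq.2 hw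
    exact ⟨v, hw', rfl⟩

lemma values_stepFun {X V : Finset (Fin m)} (h : #(insertLast V) = #X + 1) :
    values (stepFun X (insertLast V) h) = V := by
  ext v
  rw [values, mem_filter, image_stepFun, castSucc_mem_insertLast, and_iff_right (mem_univ v)]

lemma image_eq_insertLast_values (hinfl : ∀ i, i ≤ f i) : univ.image f = insertLast (values f) := by
  rw [insertLast, map_values, insert_erase]
  exact le_antisymm (Fin.le_last _) (hinfl _) ▸ mem_image_of_mem f (mem_univ _)

variable (hf : Monotone f) (hinfl : ∀ i, i ≤ f i)
include hf hinfl

lemma map_values_eq_image_ascents :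
    (values f).map Fin.castSuccEmb = (ascents f).image (fun i => f i.castSucc) := by
  rw [map_values, image_ascents hf, le_antisymm (Fin.le_last _) (hinfl _)]

lemma card_values : #(values f) = #(ascents f) := by
  rw [← card_map Fin.castSuccEmb, map_values_eq_image_ascents hf hinfl,
    card_image_of_injOn (injOn_ascents hf)]

lemma ballot_ascents_values : Ballot (ascents f) (values f) := fun t =>
  calc prefixCard (values f) t
    _ = prefixCard ((values f).map Fin.castSuccEmb) t := (prefixCard_map_castSucc _ t).symm
    _ = #{i ∈ ascents f | (f i.castSucc).val < t} := by
      rw [map_values_eq_image_ascents hf hinfl, prefixCard, filter_image,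
        card_image_of_injOn ((injOn_ascents hf).mono (filter_subset _ _))]
    _ ≤ prefixCard (ascents f) t :=
      card_le_card (monotone_filter_right _ fun i _ =>
        (Fin.le_iff_val_le_val.1 (hinfl i.castSucc)).trans_lt)

end Inflationary

open Classical in
theorem card_monotone_eq_card_ballotPairs (m p : ℕ) :
    #{f : Fin (m + 1) → Fin (m + 1) | Monotone f ∧ (∀ i, i ≤ f i) ∧ #(univ.image f) = p + 1} =
      #(ballotPairs m p) := by
  refine card_nbij (fun f => (ascents f, values f)) (fun f hf => ?_) (fun f hf g hg hfg => ?_)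
    (fun q hq => ?_)
  · obtain ⟨hmono, hinfl, hcard⟩ := (mem_filter.1 hf).2
    rw [card_image_eq_card_ascents_add_one hmono, add_left_inj] at hcard
    simp only [ballotPairs, mem_coe, mem_filter, mem_product, mem_powersetCard_univ]
    exact ⟨⟨hcard, card_values hmono hinfl ▸ hcard⟩, ballot_ascents_values hmono hinfl⟩
  · obtain ⟨hmono, hinfl, -⟩ := (mem_filter.1 hf).2
    obtain ⟨gmono, ginfl, -⟩ := (mem_filter.1 hg).2
    obtain ⟨hasc, hval⟩ := Prod.mk.inj hfg
    refine eq_of_image_eq_of_ascents_eq hmono gmono ?_ hasc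
    rw [image_eq_insertLast_values hinfl, image_eq_insertLast_values ginfl, hval]
  · obtain ⟨X, V⟩ := q
    simp only [ballotPairs, mem_coe, mem_filter, mem_product, mem_powersetCard_univ] at hq
    obtain ⟨⟨hX, hV⟩, hB⟩ := hq
    have h : #(insertLast V) = #X + 1 := by rw [card_insertLast, hX, hV]
    refine ⟨stepFun X _ h, ?_, Prod.ext (ascents_stepFun h) (values_stepFun h)⟩
    simp only [mem_coe, mem_filter, mem_univ, true_and]
    exact ⟨monotone_stepFun h, le_stepFun hB h, by rw [image_stepFun, card_insertLast, hV]⟩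

lemma SimpleGraph.ext_of_adj_of_lt {α : Type*} [LinearOrder α] {G H : SimpleGraph α}
    (h : ∀ ⦃i j⦄, i < j → (G.Adj i j ↔ H.Adj i j)) : G = H := by
  ext i j
  rcases lt_trichotomy i j with hij | rfl | hij
  · exact h hij
  · simp
  · rw [G.adj_comm, H.adj_comm]
    exact h hij

section Reach

variable {n : ℕ}

def reachGraph (f : Fin n → Fin n) : SimpleGraph (Fin n) :=
  SimpleGraph.fromRel fun i j => i < j ∧ j ≤ f i

lemma reachGraph_adj {f : Fin n → Fin n} {i j : Fin n} (h : i < j) :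
    (reachGraph f).Adj i j ↔ j ≤ f i := by
  simp [reachGraph, h, h.ne, h.not_gt]

lemma isClique_reachGraph_Icc {f : Fin n → Fin n} (hf : Monotone f) (a : Fin n) :
    (reachGraph f).IsClique (Set.Icc a (f a)) := by
  intro k hk l hl hkl
  rcases hkl.lt_or_gt with h | h
  · exact (reachGraph_adj h).2 (hl.2.trans (hf hk.1))
  · exact ((reachGraph_adj h).2 (hk.2.trans (hf hl.1))).symm

lemma intervalClique_reachGraph {f : Fin n → Fin n} (hf : Monotone f) :
    IntervalClique (reachGraph f) := fun i _ _ _ hij hadj hik hkj hil hlj hkl =>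
  isClique_reachGraph_Icc hf i ⟨hik, hkj.trans ((reachGraph_adj hij).1 hadj)⟩
    ⟨hil, hlj.trans ((reachGraph_adj hij).1 hadj)⟩ hkl

open Classical in
noncomputable def reach (G : SimpleGraph (Fin n)) (i : Fin n) : Fin n :=
  ({j | j = i ∨ G.Adj i j} : Finset (Fin n)).max' ⟨i, by simp⟩

lemma le_reach_of_adj_or_eq {G : SimpleGraph (Fin n)} {i j : Fin n} (h : j = i ∨ G.Adj i j) :
    j ≤ reach G i :=
  le_max' _ _ (by simpa using h)

lemma le_reach (G : SimpleGraph (Fin n)) (i : Fin n) : i ≤ reach G i :=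
  le_reach_of_adj_or_eq (Or.inl rfl)

open Classical in
lemma reach_eq_or_adj (G : SimpleGraph (Fin n)) (i : Fin n) :
    reach G i = i ∨ G.Adj i (reach G i) :=
  (mem_filter.1 (max'_mem ({j | j = i ∨ G.Adj i j} : Finset (Fin n)) _)).2

variable {G : SimpleGraph (Fin n)} (hG : IntervalClique G)
include hG

lemma adj_iff_le_reach {i j : Fin n} (hij : i < j) : G.Adj i j ↔ j ≤ reach G i := by
  refine ⟨fun h => le_reach_of_adj_or_eq (Or.inr h), fun h => ?_⟩
  have hlt : i < reach G i := hij.trans_le h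
  have hadj := (reach_eq_or_adj G i).resolve_left hlt.ne'
  exact hG i _ i j hlt hadj le_rfl hlt.le hij.le h hij.ne

lemma monotone_reach : Monotone (reach G) := by
  intro i i' hii'
  rcases le_or_gt (reach G i) i' with h | h
  · exact h.trans (le_reach G i')
  · rcases hii'.eq_or_lt with rfl | hlt
    · exact le_rfl
    · have hr := (adj_iff_le_reach hG (hlt.trans h)).2 le_rfl
      exact (adj_iff_le_reach hG h).1
        (hG i _ i' _ (hlt.trans h) hr hlt.le h.le (hlt.trans h).le le_rfl h.ne)

lemma reachGraph_reach : reachGraph (reach G) = G :=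
  SimpleGraph.ext_of_adj_of_lt fun _ _ hij =>
    (reachGraph_adj hij).trans (adj_iff_le_reach hG hij).symm

end Reach

section ReachGraph

variable {n : ℕ} {f : Fin n → Fin n} (hinfl : ∀ i, i ≤ f i)
include hinfl

lemma le_of_reachGraph_adj {i j : Fin n} (h : (reachGraph f).Adj i j) : j ≤ f i := by
  rcases h.ne.lt_or_gt with hij | hji
  · exact (reachGraph_adj hij).1 h
  · exact hji.le.trans (hinfl i)

open Classical in
lemma reach_reachGraph : reach (reachGraph f) = f := by
  funext i
  refine le_antisymm (max'_le _ _ _ fun j hj => ?_) ?_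
  · rcases (mem_filter.1 hj).2 with rfl | hadj
    · exact hinfl j
    · exact le_of_reachGraph_adj hinfl hadj
  · rcases (hinfl i).eq_or_lt with he | hlt
    · exact he ▸ le_reach _ i
    · exact le_reach_of_adj_or_eq (Or.inr ((reachGraph_adj hlt).2 le_rfl))

lemma subset_Icc_of_isClique {s : Finset (Fin n)} (hs : (reachGraph f).IsClique (s : Set (Fin n)))
    {a : Fin n} (ha : a ∈ s) (hmin : ∀ x ∈ s, a ≤ x) : s ⊆ Icc a (f a) := fun x hx =>
  mem_Icc.2 ⟨hmin x hx, (eq_or_ne a x).elim (fun h => h ▸ hinfl a)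
    fun h => le_of_reachGraph_adj hinfl (hs ha hx h)⟩

end ReachGraph

section MaxCliques

variable {m : ℕ} {f : Fin (m + 1) → Fin (m + 1)} (hf : Monotone f) (hinfl : ∀ i, i ≤ f i)
include hf hinfl

lemma isMaxClique_reachGraph_iff {s : Finset (Fin (m + 1))} :
    IsMaxClique (reachGraph f) s ↔ ∃ a, (∀ b < a, f b < f a) ∧ s = Icc a (f a) := by
  have hclique (a) : (reachGraph f).IsClique (Icc a (f a) : Set (Fin (m + 1))) := by
    rw [coe_Icc]
    exact isClique_reachGraph_Icc hf a
  constructor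
  · rintro ⟨hs, hmax⟩
    have hne : s.Nonempty := nonempty_iff_ne_empty.2 fun h => by
      subst h
      exact singleton_ne_empty (0 : Fin (m + 1)) (hmax {0} (by simp) (empty_subset _)).symm
    have hsub := subset_Icc_of_isClique hinfl hs (s.min'_mem hne) (s.min'_le)
    refine ⟨s.min' hne, fun b hb => lt_of_not_ge fun hfb => ?_, hmax _ (hclique _) hsub⟩
    have hs_eq := hmax _ (hclique b) (hsub.trans (Icc_subset_Icc hb.le hfb))
    exact (s.min'_le b (hs_eq ▸ left_mem_Icc.2 (hinfl b))).not_gt hb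
  · rintro ⟨a, hrec, rfl⟩
    refine ⟨hclique a, fun t ht hsub => ?_⟩
    have hat : a ∈ t := hsub (left_mem_Icc.2 (hinfl a))
    have htsub := subset_Icc_of_isClique hinfl ht (t.min'_mem ⟨a, hat⟩) (t.min'_le)
    have hfa : f a ≤ f (t.min' ⟨a, hat⟩) := (mem_Icc.1 (htsub (hsub (right_mem_Icc.2 (hinfl a))))).2
    have hmin : t.min' ⟨a, hat⟩ = a :=
      (t.min'_le a hat).eq_or_lt.resolve_right fun h => (hrec _ h).not_ge hfa
    exact hsub.antisymm (hmin ▸ htsub)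

lemma numMaxCliques_reachGraph : numMaxCliques (reachGraph f) = #(univ.image f) := by
  classical
  set R : Finset (Fin (m + 1)) := {a | ∀ b < a, f b < f a}
  have hcliques :
      ({s | IsMaxClique (reachGraph f) s} : Finset _) = R.image fun a => Icc a (f a) := by
    ext s
    simp [R, isMaxClique_reachGraph_iff hf hinfl, eq_comm]
  have himage : R.image f = univ.image f := by
    refine (image_subset_image (subset_univ R)).antisymm fun v hv => ?_
    obtain ⟨j, -, rfl⟩ := mem_image.1 hv
    obtain ⟨a, ha, hmin⟩ := ({j' | f j' = f j} : Finset _).exists_min_image id ⟨j, by simp⟩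
    simp only [mem_filter, mem_univ, true_and, id] at ha hmin
    refine mem_image.2 ⟨a, mem_filter.2 ⟨mem_univ a, fun b hb => ?_⟩, ha⟩
    exact lt_of_le_of_ne (hf hb.le) fun h => (hmin b (h.trans ha)).not_gt hb
  rw [numMaxCliques, Nat.card_eq_fintype_card, Fintype.card_subtype, hcliques, ← himage,
    card_image_of_injOn, card_image_of_injOn]
  · intro a ha b hb hab
    rcases lt_trichotomy a b with h | h | h
    · exact absurd hab ((mem_filter.1 hb).2 a h).ne
    · exact h
    · exact absurd hab ((mem_filter.1 ha).2 b h).ne'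
  · intro a _ b _ (hab : Icc a (f a) = Icc b (f b))
    have hb : b ∈ Icc a (f a) := hab ▸ left_mem_Icc.2 (hinfl b)
    have ha : a ∈ Icc b (f b) := hab ▸ left_mem_Icc.2 (hinfl a)
    exact le_antisymm (mem_Icc.1 hb).1 (mem_Icc.1 ha).1

end MaxCliques

open Classical in
theorem card_intervalClique_eq_card_monotone (m k : ℕ) :
    Nat.card {G : SimpleGraph (Fin (m + 1)) // IntervalClique G ∧ numMaxCliques G = k} =
      #{f : Fin (m + 1) → Fin (m + 1) | Monotone f ∧ (∀ i, i ≤ f i) ∧ #(univ.image f) = k} := by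
  rw [← Fintype.card_subtype, ← Nat.card_eq_fintype_card]
  exact Nat.card_congr
    { toFun := fun G => ⟨reach G.1, monotone_reach G.2.1, le_reach G.1, by
        rw [← numMaxCliques_reachGraph (monotone_reach G.2.1) (le_reach G.1),
          reachGraph_reach G.2.1, G.2.2]⟩
      invFun := fun f => ⟨reachGraph f.1, intervalClique_reachGraph f.2.1, by
        rw [numMaxCliques_reachGraph f.2.1 f.2.2.1, f.2.2.2]⟩
      left_inv := fun G => Subtype.ext (reachGraph_reach G.2.1)
      right_inv := fun f => Subtype.ext (reach_reachGraph f.2.2.1) }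

theorem card_intervalClique_graphs_with_k_max_cliques_general (n k : ℕ) (hn : 1 ≤ n)
    (hk1 : 1 ≤ k) :
    Nat.card {G : SimpleGraph (Fin n) // IntervalClique G ∧ numMaxCliques G = k} * n
      = n.choose k * n.choose (k - 1) := by
  obtain ⟨m, rfl⟩ : ∃ m, n = m + 1 := ⟨n - 1, by omega⟩
  obtain ⟨p, rfl⟩ : ∃ p, k = p + 1 := ⟨k - 1, by omega⟩
  rw [card_intervalClique_eq_card_monotone, card_monotone_eq_card_ballotPairs, card_ballotPairs_mul,
    Nat.add_sub_cancel]

/-- the number of interval-clique graphs on `{1,...,n}` with exactly `k`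
maximal cliques equals the Narayana number `(1/n)·C(n,k)·C(n,k-1)`. -/
theorem card_intervalClique_graphs_with_k_max_cliques (n k : ℕ) (hn : 1 ≤ n)
    (hk1 : 1 ≤ k) (hkn : k ≤ n) :
    Nat.card {G : SimpleGraph (Fin n) // IntervalClique G ∧ numMaxCliques G = k} * n
      = n.choose k * n.choose (k - 1) :=
  card_intervalClique_graphs_with_k_max_cliques_general n k hn hk1
end

section
/- For k ≥ 2 and k ≤ m ≤ n, the number of interval-clique graphs on {1,...,n} with k maximal cliques whose last maximal clique is exactly [m:n] equals C(n, k-1)·C(m-2, k-2) − C(n-1, k-2)·C(m-1, k-1). -/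
/-!
Deleting the last clique `[m : n]` of an interval-clique graph with `k + 1` maximal cliques leaves
one with `k` maximal cliques whose last clique `[u : v]` satisfies `k ≤ u < m` and `m - 1 ≤ v < n`,
and every such graph arises exactly once. This gives the recurrence for `p(m, n, k)`; the closed
form then follows by induction on `k`, each step summing over `v` and then over `u` with the
hockey-stick identity `∑_{a ≤ i < b} C(i, j) = C(b, j + 1) - C(a, j + 1)`.
-/

open Finset

theorem StrictMono.apply_zero_add_le {n : ℕ} {f : Fin (n + 1) → ℕ} (hf : StrictMono f)
    (i : Fin (n + 1)) : f 0 + i ≤ f i := by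
  induction i using Fin.induction with
  | zero => simp
  | succ i ih =>
    have := hf (Fin.castSucc_lt_succ (i := i))
    simp only [Fin.val_succ, Fin.val_castSucc] at ih ⊢
    omega

theorem StrictMono.finSnoc {α : Type*} [Preorder α] {n : ℕ} {f : Fin n → α} (hf : StrictMono f)
    {x : α} (hx : ∀ i, f i < x) : StrictMono (Fin.snoc f x : Fin (n + 1) → α) := by
  rw [← Fin.insertNth_last', Fin.strictMono_insertNth_iff]
  exact ⟨hf, fun i _ => hx i, fun i hi => absurd hi (not_le.mpr (Fin.castSucc_lt_last i))⟩

theorem sum_Ico_choose_tsub (s j : ℕ) {a b : ℕ} (hsa : s ≤ a) (hab : a ≤ b) :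
    ∑ u ∈ Ico a b, ((u - s).choose j : ℤ) = (b - s).choose (j + 1) - (a - s).choose (j + 1) := by
  induction b, hab using Nat.le_induction with
  | base => simp
  | succ b hab ih =>
    rw [sum_Ico_succ_top hab, ih, show b + 1 - s = b - s + 1 by omega, Nat.choose_succ_succ']
    push_cast
    ring

/-- `p = (a, b)` lists the `k + 1` (not `k`) maximal cliques `[a i : b i]` of an interval-clique
graph whose last maximal clique is `[m : n]`. -/
structure IsCliqueEnds (k m n : ℕ) (p : (Fin (k + 1) → ℕ) × (Fin (k + 1) → ℕ)) : Prop where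
  strictMono_fst : StrictMono p.1
  strictMono_snd : StrictMono p.2
  fst_zero : p.1 0 = 1
  one_le_snd_zero : 1 ≤ p.2 0
  fst_succ_le : ∀ i : Fin k, p.1 i.succ ≤ p.2 i.castSucc + 1
  fst_last : p.1 (Fin.last k) = m
  snd_last : p.2 (Fin.last k) = n

namespace IsCliqueEnds

variable {k m n : ℕ} {p : (Fin (k + 1) → ℕ) × (Fin (k + 1) → ℕ)}

theorem fst_le (hp : IsCliqueEnds k m n p) (i : Fin (k + 1)) : p.1 i ≤ m :=
  (hp.strictMono_fst.monotone (Fin.le_last i)).trans_eq hp.fst_last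

theorem snd_le (hp : IsCliqueEnds k m n p) (i : Fin (k + 1)) : p.2 i ≤ n :=
  (hp.strictMono_snd.monotone (Fin.le_last i)).trans_eq hp.snd_last

instance : Finite {p // IsCliqueEnds k m n p} :=
  Set.Finite.to_subtype <| ((Set.finite_Iic fun _ => m).prod (Set.finite_Iic fun _ => n)).subset
    fun _ hp => ⟨hp.fst_le, hp.snd_le⟩

theorem iff_zero (hn : 1 ≤ n) {p : (Fin 1 → ℕ) × (Fin 1 → ℕ)} :
    IsCliqueEnds 0 m n p ↔ m = 1 ∧ p = (fun _ => 1, fun _ => n) := by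
  constructor
  · rintro ⟨-, -, h0, -, -, hm, hn⟩
    exact ⟨hm ▸ h0, Prod.ext (funext fun i => by rwa [Subsingleton.elim i 0])
      (funext fun i => by rwa [Subsingleton.elim i (Fin.last 0)])⟩
  · rintro ⟨rfl, rfl⟩
    have hmono (f : Fin 1 → ℕ) : StrictMono f := Fin.strictMono_iff_lt_succ.mpr (·.elim0)
    exact ⟨hmono _, hmono _, rfl, hn, (·.elim0), rfl, rfl⟩

theorem init {p : (Fin (k + 2) → ℕ) × (Fin (k + 2) → ℕ)} (hp : IsCliqueEnds (k + 1) m n p) :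
    IsCliqueEnds k (p.1 (Fin.last k).castSucc) (p.2 (Fin.last k).castSucc)
      (Fin.init p.1, Fin.init p.2) where
  strictMono_fst := hp.strictMono_fst.comp Fin.strictMono_castSucc
  strictMono_snd := hp.strictMono_snd.comp Fin.strictMono_castSucc
  fst_zero := hp.fst_zero
  one_le_snd_zero := hp.one_le_snd_zero
  fst_succ_le i := hp.fst_succ_le i.castSucc
  fst_last := rfl
  snd_last := rfl

theorem penultimate_mem {p : (Fin (k + 2) → ℕ) × (Fin (k + 2) → ℕ)}
    (hp : IsCliqueEnds (k + 1) m n p) :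
    (p.1 (Fin.last k).castSucc, p.2 (Fin.last k).castSucc) ∈ Ico (k + 1) m ×ˢ Ico (m - 1) n := by
  have hlow := hp.strictMono_fst.apply_zero_add_le (Fin.last k).castSucc
  have hfst := hp.strictMono_fst (Fin.castSucc_lt_last (Fin.last k))
  have hsnd := hp.strictMono_snd (Fin.castSucc_lt_last (Fin.last k))
  have hgap := hp.fst_succ_le (Fin.last k)
  simp only [hp.fst_zero, hp.fst_last, hp.snd_last, Fin.val_castSucc, Fin.val_last,
    Fin.succ_last] at hlow hfst hsnd hgap
  simp only [mem_product, mem_Ico]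
  omega

theorem snoc {u v : ℕ} (hp : IsCliqueEnds k u v p) (hum : u < m) (hvn : v < n)
    (hmv : m ≤ v + 1) :
    IsCliqueEnds (k + 1) m n (Fin.snoc p.1 m, Fin.snoc p.2 n) where
  strictMono_fst := hp.strictMono_fst.finSnoc fun i => (hp.fst_le i).trans_lt hum
  strictMono_snd := hp.strictMono_snd.finSnoc fun i => (hp.snd_le i).trans_lt hvn
  fst_zero := by simpa using hp.fst_zero
  one_le_snd_zero := by simpa using hp.one_le_snd_zero
  fst_succ_le i := by
    induction i using Fin.lastCases with
    | last => simpa [hp.snd_last] using hmv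
    | cast i =>
      dsimp only
      rw [Fin.succ_castSucc, Fin.snoc_castSucc, Fin.snoc_castSucc]
      exact hp.fst_succ_le i
  fst_last := by simp
  snd_last := by simp

end IsCliqueEnds

theorem card_isCliqueEnds_zero {m n : ℕ} (hn : 1 ≤ n) :
    Nat.card {p // IsCliqueEnds 0 m n p} = if m = 1 then 1 else 0 := by
  simp only [IsCliqueEnds.iff_zero hn]
  split_ifs <;> simp [*]

/-- Removing the last clique. -/
def cliqueEndsSuccEquiv (k m n : ℕ) :
    {p // IsCliqueEnds (k + 1) m n p} ≃
      Σ uv : ↥(Ico (k + 1) m ×ˢ Ico (m - 1) n), {q // IsCliqueEnds k uv.1.1 uv.1.2 q} where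
  toFun p := ⟨⟨_, p.2.penultimate_mem⟩, ⟨_, p.2.init⟩⟩
  invFun x := ⟨_, x.2.2.snoc (by grind) (by grind) (by grind)⟩
  left_inv := by
    rintro ⟨⟨a, b⟩, hp⟩
    ext : 2
    · simp [← hp.fst_last]
    · simp [← hp.snd_last]
  right_inv := by
    rintro ⟨⟨⟨u, v⟩, huv⟩, ⟨⟨a, b⟩, hq⟩⟩
    refine Sigma.subtype_ext ?_ ?_
    · simpa using ⟨hq.fst_last, hq.snd_last⟩
    · simp

theorem card_isCliqueEnds_succ (k m n : ℕ) :
    Nat.card {p // IsCliqueEnds (k + 1) m n p} =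
      ∑ u ∈ Ico (k + 1) m, ∑ v ∈ Ico (m - 1) n, Nat.card {q // IsCliqueEnds k u v q} := by
  rw [Nat.card_congr (cliqueEndsSuccEquiv k m n), Nat.card_sigma,
    sum_coe_sort (Ico (k + 1) m ×ˢ Ico (m - 1) n)
      fun uv => Nat.card {q // IsCliqueEnds k uv.1 uv.2 q}, sum_product]

theorem card_isCliqueEnds_one {m n : ℕ} (hm : 2 ≤ m) (hn : m ≤ n) :
    Nat.card {p // IsCliqueEnds 1 m n p} = n + 1 - m := by
  have hcard (u v : ℕ) (hv : v ∈ Ico (m - 1) n) :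
      Nat.card {q // IsCliqueEnds 0 u v q} = if u = 1 then 1 else 0 :=
    card_isCliqueEnds_zero (by grind)
  rw [card_isCliqueEnds_succ, sum_congr rfl fun u _ => sum_congr rfl (hcard u),
    sum_eq_single_of_mem 1 (mem_Ico.mpr ⟨le_rfl, hm⟩) fun u _ hu => by simp [hu]]
  simp only [if_true, sum_const, Nat.card_Ico, smul_eq_mul, mul_one]
  omega

theorem card_isCliqueEnds (j : ℕ) {m n : ℕ} (hm : j + 2 ≤ m) (hn : m ≤ n) :
    (Nat.card {p // IsCliqueEnds (j + 1) m n p} : ℤ) =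
      n.choose (j + 1) * (m - 2).choose j - (n - 1).choose j * (m - 1).choose (j + 1) := by
  induction j generalizing m n with
  | zero =>
    rw [card_isCliqueEnds_one hm hn]
    simp only [zero_add, Nat.choose_one_right, Nat.choose_zero_right, Nat.cast_one, mul_one,
      one_mul]
    omega
  | succ j ih =>
    have hcard (u : ℕ) (hu : u ∈ Ico (j + 2) m) (v : ℕ) (hv : v ∈ Ico (m - 1) n) :
        (Nat.card {q // IsCliqueEnds (j + 1) u v q} : ℤ) =
          v.choose (j + 1) * (u - 2).choose j - (v - 1).choose j * (u - 1).choose (j + 1) :=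
      ih (by grind) (by grind)
    rw [card_isCliqueEnds_succ]
    push_cast
    rw [sum_congr rfl fun u hu => sum_congr rfl (hcard u hu)]
    simp only [sum_sub_distrib, ← sum_mul, ← mul_sum]
    have hv₁ := sum_Ico_choose_tsub 0 (j + 1) (Nat.zero_le (m - 1)) (show m - 1 ≤ n by omega)
    have hv₂ := sum_Ico_choose_tsub 1 j (show 1 ≤ m - 1 by omega) (show m - 1 ≤ n by omega)
    have hu₁ := sum_Ico_choose_tsub 2 j le_add_self (show j + 2 ≤ m by omega)
    have hu₂ := sum_Ico_choose_tsub 1 (j + 1) (by omega) (show j + 2 ≤ m by omega)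
    simp only [Nat.sub_zero] at hv₁
    rw [hv₁, hv₂, hu₁, hu₂]
    simp only [add_tsub_cancel_right, Nat.choose_succ_self, Nat.cast_zero, sub_zero, Nat.sub_sub,
      Nat.add_one_sub_one]
    ring

theorem isCliqueEnds_iff {k m n : ℕ} (hmn : m ≤ n) (p : (Fin (k + 1) → ℕ) × (Fin (k + 1) → ℕ)) :
    IsCliqueEnds k m n p ↔
      StrictMono p.1 ∧ StrictMono p.2 ∧
        p.1 ⟨0, by omega⟩ = 1 ∧ (∀ i, p.1 i ≤ n) ∧
        1 ≤ p.2 ⟨0, by omega⟩ ∧ p.2 ⟨k + 1 - 1, by omega⟩ = n ∧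
        (∀ i : Fin (k + 1), ∀ h : i.val + 1 < k + 1, p.1 ⟨i.val + 1, h⟩ ≤ p.2 i + 1) ∧
        p.1 ⟨k + 1 - 1, by omega⟩ = m := by
  rw [Fin.mk_zero]
  constructor
  · intro hp
    exact ⟨hp.strictMono_fst, hp.strictMono_snd, hp.fst_zero, fun i => (hp.fst_le i).trans hmn,
      hp.one_le_snd_zero, hp.snd_last, fun i h => hp.fst_succ_le ⟨i, by omega⟩, hp.fst_last⟩
  · rintro ⟨ha, hb, ha0, -, hb0, hbl, hsucc, hal⟩
    exact ⟨ha, hb, ha0, hb0, fun i => hsucc i.castSucc (by simp), hal, hbl⟩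

/-- for `k ≥ 2` and `k ≤ m ≤ n`, the number of interval-clique graphs on
`{1,...,n}` with `k` maximal cliques whose last maximal clique is exactly `[m:n]`
(such graphs being determined by their sequences of maximal-clique endpoints
`1 = a_1 < ... < a_k ≤ n`, `1 ≤ b_1 < ... < b_k = n`, `a_{i+1} ≤ b_i + 1`, with
`a_k = m`, `b_k = n`) equals `C(n,k-1)·C(m-2,k-2) − C(n-1,k-2)·C(m-1,k-1)`. -/
theorem card_intervalClique_last_clique_fixed (n m k : ℕ) (hk : 2 ≤ k) (hm : k ≤ m)
    (hn : m ≤ n) :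
    Nat.card {p : (Fin k → ℕ) × (Fin k → ℕ) //
        StrictMono p.1 ∧ StrictMono p.2 ∧
        p.1 ⟨0, by omega⟩ = 1 ∧ (∀ i, p.1 i ≤ n) ∧
        1 ≤ p.2 ⟨0, by omega⟩ ∧ p.2 ⟨k - 1, by omega⟩ = n ∧
        (∀ i : Fin k, ∀ h : i.val + 1 < k, p.1 ⟨i.val + 1, h⟩ ≤ p.2 i + 1) ∧
        p.1 ⟨k - 1, by omega⟩ = m}
      = n.choose (k - 1) * (m - 2).choose (k - 2)
        - (n - 1).choose (k - 2) * (m - 1).choose (k - 1) := by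
  obtain ⟨j, rfl⟩ : ∃ j, k = j + 2 := ⟨k - 2, by omega⟩
  rw [← Nat.card_congr (Equiv.subtypeEquivRight (isCliqueEnds_iff (k := j + 1) hn))]
  have hcard := card_isCliqueEnds j hm hn
  rw [show j + 2 - 1 = j + 1 by omega, show j + 2 - 2 = j by omega]
  apply Nat.eq_sub_of_add_eq
  linarith
end

section
/- If p(m,n,k) is defined by p(m,n,1) = 1 if m = 1 and 0 otherwise, and p(m,n,k+1) = Σ_{u=k}^{m-1} Σ_{v=m-1}^{n-1} p(u,v,k), then for k ≥ 2 and k ≤ m ≤ n, p(m,n,k) = C(n,k-1)·C(m-2,k-2) − C(n-1,k-2)·C(m-1,k-1). -/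
/-!
Induction on `k`. For `k = 2` only `u = 1` contributes, giving `n - m + 1`. In the inductive
step, substituting the closed form for `p u v k` makes the double sum split into products of
single sums of binomial coefficients in `u` and in `v`, each of which the hockey-stick identity
evaluates; the two cross terms `C(m-2,k-1)·C(m-1,k)` cancel, leaving the closed form for `k + 1`.
-/

open Finset

theorem sum_Ico_choose_sub (j d a b : ℕ) (hda : d ≤ a) (hab : a ≤ b) :
    ∑ v ∈ Ico a b, ((v - d).choose j : ℤ)
      = ((b - d).choose (j + 1) : ℤ) - ((a - d).choose (j + 1) : ℤ) := by
  induction b, hab using Nat.le_induction with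
  | base => simp
  | succ b hab ih =>
    rw [sum_Ico_succ_top hab, ih, show b + 1 - d = b - d + 1 by omega, Nat.choose_succ_succ']
    push_cast
    ring

theorem sum_Icc_choose_sub (j d a b : ℕ) (hda : d ≤ a) (hab : a ≤ b + 1) :
    ∑ v ∈ Icc a b, ((v - d).choose j : ℤ)
      = ((b + 1 - d).choose (j + 1) : ℤ) - ((a - d).choose (j + 1) : ℤ) := by
  rw [← Ico_add_one_right_eq_Icc, sum_Ico_choose_sub j d a (b + 1) hda hab]

theorem Finset.sum_sum_mul_sub_mul {ι κ R : Type*} [CommRing R] (s : Finset ι) (t : Finset κ)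
    (f f' : ι → R) (g g' : κ → R) :
    ∑ u ∈ s, ∑ v ∈ t, (g v * f u - g' v * f' u)
      = (∑ u ∈ s, f u) * (∑ v ∈ t, g v) - (∑ u ∈ s, f' u) * (∑ v ∈ t, g' v) := by
  simp only [sum_mul_sum, ← sum_sub_distrib]
  exact sum_congr rfl fun u _ => sum_congr rfl fun v _ => by ring

theorem recurrence_two (p : ℕ → ℕ → ℕ → ℤ)
    (hbase : ∀ m n, p m n 1 = if m = 1 then 1 else 0)
    (hrec : ∀ m n, p m n 2 = ∑ u ∈ Icc 1 (m - 1), ∑ v ∈ Icc (m - 1) (n - 1), p u v 1)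
    (m n : ℕ) (hm : 2 ≤ m) (hn : m ≤ n) :
    p m n 2 = n - m + 1 := by
  have hone : (1 : ℕ) ∈ Icc 1 (m - 1) := mem_Icc.2 ⟨le_rfl, by omega⟩
  simp only [hrec, hbase, sum_ite_irrel, sum_const_zero, sum_ite_eq', if_pos hone, sum_const,
    Nat.card_Icc, nsmul_eq_mul, mul_one]
  omega

/-- if `p(m,n,1) = [m = 1]` and
`p(m,n,k+1) = Σ_{u=k}^{m-1} Σ_{v=m-1}^{n-1} p(u,v,k)`, then for `k ≥ 2` and `k ≤ m ≤ n`,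
`p(m,n,k) = C(n,k-1)·C(m-2,k-2) − C(n-1,k-2)·C(m-1,k-1)`. -/
theorem recurrence_solution (p : ℕ → ℕ → ℕ → ℤ)
    (hbase : ∀ m n, p m n 1 = if m = 1 then 1 else 0)
    (hrec : ∀ m n k, 1 ≤ k →
      p m n (k + 1) = ∑ u ∈ Finset.Icc k (m - 1), ∑ v ∈ Finset.Icc (m - 1) (n - 1), p u v k)
    (k m n : ℕ) (hk : 2 ≤ k) (hm : k ≤ m) (hn : m ≤ n) :
    p m n k = (n.choose (k - 1) : ℤ) * ((m - 2).choose (k - 2) : ℤ)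
      - ((n - 1).choose (k - 2) : ℤ) * ((m - 1).choose (k - 1) : ℤ) := by
  induction k, hk using Nat.le_induction generalizing m n with
  | base =>
    rw [recurrence_two p hbase (fun m n => hrec m n 1 le_rfl) m n hm hn]
    simp only [Nat.add_one_sub_one, Nat.choose_one_right, tsub_self, Nat.choose_zero_right,
      Nat.cast_one, mul_one, one_mul]
    omega
  | succ k hk ih =>
    obtain ⟨j, rfl⟩ : ∃ j, k = j + 2 := ⟨k - 2, by omega⟩
    -- `v - 0` makes all four single sums instances of `sum_Icc_choose_sub`
    calc p m n (j + 2 + 1)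
        = ∑ u ∈ Icc (j + 2) (m - 1), ∑ v ∈ Icc (m - 1) (n - 1),
            (((v - 0).choose (j + 1) : ℤ) * ((u - 2).choose j : ℤ)
              - ((v - 1).choose j : ℤ) * ((u - 1).choose (j + 1) : ℤ)) := by
          rw [hrec m n (j + 2) (by omega)]
          refine sum_congr rfl fun u hu => sum_congr rfl fun v hv => ?_
          rw [mem_Icc] at hu hv
          simpa using ih u v hu.1 (by omega)
      _ = ((m - 2).choose (j + 1) : ℤ) * ((n.choose (j + 2) : ℤ) - ((m - 1).choose (j + 2) : ℤ))
            - ((m - 1).choose (j + 2) : ℤ)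
              * (((n - 1).choose (j + 1) : ℤ) - ((m - 2).choose (j + 1) : ℤ)) := by
          rw [sum_sum_mul_sub_mul, sum_Icc_choose_sub j 2 _ _ (by omega) (by omega),
            sum_Icc_choose_sub (j + 1) 0 _ _ (by omega) (by omega),
            sum_Icc_choose_sub (j + 1) 1 _ _ (by omega) (by omega),
            sum_Icc_choose_sub j 1 _ _ (by omega) (by omega)]
          simp [show m - 1 + 1 - 2 = m - 2 by omega, show m - 1 + 1 - 1 = m - 1 by omega,
            show n - 1 + 1 = n by omega, show m - 1 - 1 = m - 2 by omega]
      _ = _ := by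
          simp only [show j + 2 + 1 - 1 = j + 2 from rfl, show j + 2 + 1 - 2 = j + 1 from rfl]
          ring
end

section
/- The number of distinct isomorphism classes (structures) of 1D random geometric graphs on n nodes is at most the n-th Catalan number, and hence the structural entropy satisfies H(S_{n,r}) ≤ 2n − (3/2)·log₂ n − (1/2)·log₂ π, for any n, any connection range r > 0, and any distribution of node locations. -/
open MeasureTheory

/-- Graphs on `Fin n` up to isomorphism. -/
def isoSetoid (n : ℕ) : Setoid (SimpleGraph (Fin n)) where
  r G G' := Nonempty (G ≃g G')
  iseqv := ⟨fun G => ⟨SimpleGraph.Iso.refl⟩, fun ⟨e⟩ => ⟨e.symm⟩, fun ⟨e⟩ ⟨f⟩ => ⟨e.trans f⟩⟩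

/-- The type of graphical structures (isomorphism classes of graphs) on `n` vertices. -/
def GraphStruct (n : ℕ) : Type := Quotient (isoSetoid n)

noncomputable instance (n : ℕ) : Fintype (GraphStruct n) :=
  @Quotient.fintype _ _ (isoSetoid n) (Classical.decRel _)

/-- The geometric graph of node locations `x` with connection range `r`. -/
def graphOf {n : ℕ} (r : ℝ) (x : Fin n → ℝ) : SimpleGraph (Fin n) where
  Adj i j := i ≠ j ∧ |x i - x j| ≤ r
  symm := by
    constructor
    intro i j h
    exact ⟨h.1.symm, by rw [abs_sub_comm]; exact h.2⟩
  loopless := by constructor; intro i h; exact h.1 rfl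

/-- The structure (isomorphism class) of the geometric graph of `x`. -/
def structOf {n : ℕ} (r : ℝ) (x : Fin n → ℝ) : GraphStruct n :=
  Quotient.mk (isoSetoid n) (graphOf r x)

/-!
Sorting the positions does not change the structure, and for sorted positions the neighbours of
node `j` among the earlier nodes are exactly those of index `≥ a j`, where `a j` counts the earlier
nodes out of range. So the structure is determined by `a`, a monotone sequence with `a j ≤ j`.
Such sequences inject into Dyck words of semilength `n`: put `a (j + 1) - a j` steps `D` after
the `j`-th `U` (with `a n = n`), so that `a j` is the number of `D`s before the `j`-th `U`.
Hence there are at most `catalan n` structures.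
The entropy of a distribution with at most `N` atoms is at most `log N` (Jensen), and Wallis'
inequality `W n ≥ (2n+1)/(2n+2) · π/2` gives `catalan n ^ 2 · π n ^ 3 ≤ 16 ^ n`.
-/

open Real Finset List DyckStep
open scoped Nat

section Catalan

theorem catalan_pos (n : ℕ) : 0 < catalan n :=
  Nat.pos_of_mul_pos_left ((succ_mul_catalan_eq_centralBinom n).symm ▸ Nat.centralBinom_pos n)

theorem Nat.centralBinom_mul_factorial_mul_factorial (n : ℕ) :
    n.centralBinom * n ! * n ! = (2 * n)! := by
  have h := Nat.choose_mul_factorial_mul_factorial (show n ≤ 2 * n by omega)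
  rwa [show 2 * n - n = n by omega, ← Nat.centralBinom_eq_two_mul_choose] at h

theorem catalan_sq_mul_le_sixteen_pow (n : ℕ) :
    (catalan n : ℝ) ^ 2 * (π * n ^ 3) ≤ 16 ^ n := by
  have hfact : (n.centralBinom : ℝ) * n ! * n ! = (2 * n)! := by
    exact_mod_cast Nat.centralBinom_mul_factorial_mul_factorial n
  have hcat : ((n : ℝ) + 1) * catalan n = n.centralBinom := by
    exact_mod_cast succ_mul_catalan_eq_centralBinom n
  have hC : (0 : ℝ) < catalan n := by exact_mod_cast catalan_pos n
  have hWallis : Wallis.W n = 16 ^ n / ((n + 1) ^ 2 * catalan n ^ 2 * (2 * n + 1)) := by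
    have hF : (n ! : ℝ) ≠ 0 := by positivity
    rw [Wallis.W_eq_factorial_ratio, ← hfact, ← hcat, pow_mul]
    field_simp
    norm_num
  have hW := Wallis.le_W n
  rw [hWallis, le_div_iff₀ (by positivity)] at hW
  have hcube : 4 * (n : ℝ) ^ 3 ≤ (2 * n + 1) ^ 2 * (n + 1) := by
    nlinarith [(n.cast_nonneg : (0 : ℝ) ≤ n)]
  calc (catalan n : ℝ) ^ 2 * (π * n ^ 3) ≤ π * catalan n ^ 2 * ((2 * n + 1) ^ 2 * (n + 1)) / 4 := by
        nlinarith [mul_le_mul_of_nonneg_left hcube (by positivity : 0 ≤ π * (catalan n : ℝ) ^ 2)]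
    _ = (2 * n + 1) / (2 * n + 2) * (π / 2) * ((n + 1) ^ 2 * catalan n ^ 2 * (2 * n + 1)) := by
        field_simp
        ring
    _ ≤ 16 ^ n := hW

theorem logb_catalan_le {n : ℕ} (hn : n ≠ 0) :
    logb 2 (catalan n) ≤ 2 * n - 3 / 2 * logb 2 n - 1 / 2 * logb 2 π := by
  have hC : (0 : ℝ) < catalan n := by exact_mod_cast catalan_pos n
  have h := logb_le_logb_of_le one_lt_two (by positivity) (catalan_sq_mul_le_sixteen_pow n)
  have h16 : logb 2 (16 : ℝ) = 4 := by
    rw [show (16 : ℝ) = 2 ^ (4 : ℕ) by norm_num, logb_pow, logb_self_eq_one one_lt_two]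
    norm_num
  rw [logb_mul (by positivity) (by positivity), logb_mul pi_ne_zero (by positivity), logb_pow,
    logb_pow, logb_pow, h16] at h
  push_cast at h
  linarith

end Catalan

section Entropy

theorem sum_negMulLog_le_log_card {ι : Type*} (s : Finset ι) (p : ι → ℝ)
    (h0 : ∀ i ∈ s, 0 ≤ p i) (h1 : ∑ i ∈ s, p i = 1) :
    ∑ i ∈ s, negMulLog (p i) ≤ log #s := by
  have hs : (0 : ℝ) < #s := by
    have : s.Nonempty := Finset.nonempty_of_sum_ne_zero (by rw [h1]; exact one_ne_zero)
    exact_mod_cast this.card_pos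
  have hJensen := concaveOn_negMulLog.le_map_sum (t := s) (w := fun _ => (#s : ℝ)⁻¹) (p := p)
    (fun _ _ => by positivity) (by simp [hs.ne']) h0
  simp only [smul_eq_mul, ← mul_sum, h1, mul_one] at hJensen
  rw [negMulLog, log_inv] at hJensen
  field_simp at hJensen
  linarith

theorem neg_sum_mul_logb_le_logb {ι : Type*} [Fintype ι] {b : ℝ} (hb : 1 < b) (p : ι → ℝ)
    (h0 : ∀ i, 0 ≤ p i) (h1 : ∑ i, p i = 1) {N : ℕ} (hN : #{i | p i ≠ 0} ≤ N) :
    -∑ i, p i * logb b (p i) ≤ logb b N := by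
  classical
  have hsupp : ∑ i ∈ {i | p i ≠ 0}, p i = 1 := by rwa [sum_filter_ne_zero]
  have hpos : (0 : ℝ) < #{i | p i ≠ 0} := by
    have : ({i | p i ≠ 0} : Finset ι).Nonempty :=
      Finset.nonempty_of_sum_ne_zero (by rw [hsupp]; exact one_ne_zero)
    exact_mod_cast this.card_pos
  have hent : -∑ i, p i * logb b (p i) = (∑ i ∈ {i | p i ≠ 0}, negMulLog (p i)) / log b := by
    rw [sum_filter_of_ne fun i _ => mt fun (hpi : p i = 0) => by simp [hpi], sum_div,
      ← sum_neg_distrib]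
    simp only [negMulLog, logb]
    congr! 1 with i
    ring
  rw [hent, logb, div_le_div_iff_of_pos_right (log_pos hb)]
  calc _ ≤ log #{i | p i ≠ 0} := sum_negMulLog_le_log_card _ p (fun i _ => h0 i) hsupp
    _ ≤ log N := log_le_log hpos (by exact_mod_cast hN)

theorem neg_sum_measureReal_mul_logb_le {Ω α : Type*} [MeasurableSpace Ω] [Fintype α]
    {μ : Measure Ω} [IsProbabilityMeasure μ] {b : ℝ} (hb : 1 < b) (f : Ω → α)
    (hf : ∀ a, MeasurableSet (f ⁻¹' {a})) {N : ℕ} (hN : (Set.range f).ncard ≤ N) :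
    -∑ a, μ.real (f ⁻¹' {a}) * logb b (μ.real (f ⁻¹' {a})) ≤ logb b N := by
  classical
  refine neg_sum_mul_logb_le_logb hb _ (fun _ => measureReal_nonneg) ?_ (le_trans ?_ hN)
  · simpa using sum_measureReal_preimage_singleton (μ := μ) univ fun a _ => hf a
  · rw [← Set.ncard_coe_finset]
    refine Set.ncard_le_ncard (fun a ha => ?_) (Set.toFinite _)
    obtain ⟨ω, hω⟩ := nonempty_of_measureReal_ne_zero (mem_filter.1 (mem_coe.1 ha)).2
    exact ⟨ω, hω⟩

end Entropy

/-- `ballotWord c m = U D^(c 1 - c 0) U D^(c 2 - c 1) ⋯ U D^(c m - c (m - 1))`. -/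
def ballotWord : (ℕ → ℕ) → ℕ → List DyckStep
  | _, 0 => []
  | c, m + 1 => U :: (replicate (c 1 - c 0) D ++ ballotWord (fun j => c (j + 1)) m)

def countDBeforeEachU : List DyckStep → ℕ → List ℕ
  | [], _ => []
  | U :: w, d => d :: countDBeforeEachU w d
  | D :: w, d => countDBeforeEachU w (d + 1)

section ballotWord

variable {c : ℕ → ℕ}

theorem Monotone.comp_succ (hc : Monotone c) : Monotone fun j => c (j + 1) :=
  fun _ _ h => hc (Nat.succ_le_succ h)

theorem count_U_ballotWord (c : ℕ → ℕ) (m : ℕ) : (ballotWord c m).count U = m := by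
  induction m generalizing c with
  | zero => rfl
  | succ m ih => simp [ballotWord, count_replicate, ih]

theorem count_D_ballotWord (hc : Monotone c) (m : ℕ) :
    (ballotWord c m).count D = c m - c 0 := by
  induction m generalizing c with
  | zero => simp [ballotWord]
  | succ m ih =>
    have h01 := hc (Nat.zero_le 1)
    have h1m := hc (show 1 ≤ m + 1 by omega)
    have := ih hc.comp_succ
    simp only [ballotWord, ne_eq, reduceCtorEq, not_false_eq_true, count_cons_of_ne, count_append,
      count_replicate_self, this, zero_add]
    omega

theorem count_D_take_ballotWord_add_le (hc : Monotone c) {e : ℕ} (hce : ∀ j, c j ≤ j + e)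
    (m i : ℕ) :
    ((ballotWord c m).take i).count D + c 0 ≤ e + ((ballotWord c m).take i).count U := by
  induction m generalizing c e i with
  | zero => simpa [ballotWord] using hce 0
  | succ m ih =>
    cases i with
    | zero => simpa using hce 0
    | succ i =>
      have h01 := hc (Nat.zero_le 1)
      have h1 := hce 1
      have ih' := ih hc.comp_succ (e := e + 1)
        (fun j => by have := hce (j + 1); omega) (i - (c 1 - c 0))
      simp only [zero_add] at ih'
      simp only [ballotWord, take_succ_cons, count_cons_self, ne_eq, reduceCtorEq,
        not_false_eq_true, count_cons_of_ne, take_append, take_replicate, length_replicate,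
        count_append, count_replicate_self, count_replicate, beq_iff_eq, ↓reduceIte]
      omega

theorem countDBeforeEachU_replicate_D_append (w : List DyckStep) (k d : ℕ) :
    countDBeforeEachU (replicate k D ++ w) d = countDBeforeEachU w (d + k) := by
  induction k generalizing d with
  | zero => rfl
  | succ k ih =>
    rw [replicate_succ, cons_append, countDBeforeEachU, ih]
    congr 1
    omega

theorem countDBeforeEachU_ballotWord (hc : Monotone c) (m : ℕ) :
    countDBeforeEachU (ballotWord c m) (c 0) = ofFn fun i : Fin m => c i := by
  induction m generalizing c with
  | zero => rfl
  | succ m ih =>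
    rw [ballotWord, countDBeforeEachU, countDBeforeEachU_replicate_D_append,
      Nat.add_sub_cancel' (hc (Nat.zero_le 1)), ofFn_succ]
    exact congrArg _ (ih hc.comp_succ)

end ballotWord

def catalanSeqs (n : ℕ) : Set (Fin n → ℕ) := {a | Monotone a ∧ ∀ j, a j ≤ j}

section catalanSeqs

variable {n : ℕ} {a : Fin n → ℕ}

/-- The value `n` past the end makes the last block of `D`s of the ballot word close it. -/
def extendSeq (a : Fin n → ℕ) (j : ℕ) : ℕ := if h : j < n then a ⟨j, h⟩ else n

theorem extendSeq_le (ha : a ∈ catalanSeqs n) (j : ℕ) : extendSeq a j ≤ j := by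
  unfold extendSeq
  split_ifs with h
  · exact ha.2 _
  · omega

theorem monotone_extendSeq (ha : a ∈ catalanSeqs n) : Monotone (extendSeq a) := by
  intro j j' hjj'
  unfold extendSeq
  split_ifs with h h' h'
  · exact ha.1 (Fin.mk_le_mk.2 hjj')
  · exact (ha.2 _).trans h.le
  · omega
  · rfl

theorem extendSeq_zero (ha : a ∈ catalanSeqs n) : extendSeq a 0 = 0 :=
  Nat.le_zero.1 (extendSeq_le ha 0)

theorem extendSeq_self : extendSeq a n = n := by simp [extendSeq]

def catalanSeqToDyckWord (a : catalanSeqs n) : {p : DyckWord // p.semilength = n} where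
  val :=
    { toList := ballotWord (extendSeq a.1) n
      count_U_eq_count_D := by
        rw [count_U_ballotWord, count_D_ballotWord (monotone_extendSeq a.2), extendSeq_self,
          extendSeq_zero a.2, Nat.sub_zero]
      count_D_le_count_U i :=
        le_of_add_le_left (count_D_take_ballotWord_add_le (monotone_extendSeq a.2) (e := 0)
          (extendSeq_le a.2) n i |>.trans_eq (zero_add _)) }
  property := count_U_ballotWord _ _

theorem countDBeforeEachU_catalanSeqToDyckWord (a : catalanSeqs n) :
    countDBeforeEachU (catalanSeqToDyckWord a).1.toList 0 = ofFn a.1 := by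
  conv_lhs => rw [← extendSeq_zero a.2]
  rw [catalanSeqToDyckWord, countDBeforeEachU_ballotWord (monotone_extendSeq a.2)]
  simp [extendSeq]

theorem catalanSeqToDyckWord_injective :
    Function.Injective (catalanSeqToDyckWord (n := n)) := fun a b h =>
  Subtype.ext <| ofFn_injective <| by
    rw [← countDBeforeEachU_catalanSeqToDyckWord, ← countDBeforeEachU_catalanSeqToDyckWord, h]

instance : Finite (catalanSeqs n) :=
  Finite.of_injective _ catalanSeqToDyckWord_injective

theorem card_catalanSeqs_le : Nat.card (catalanSeqs n) ≤ catalan n := by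
  rw [← DyckWord.card_dyckWord_semilength_eq_catalan, ← Nat.card_eq_fintype_card]
  exact Nat.card_le_card_of_injective _ catalanSeqToDyckWord_injective

end catalanSeqs

section GeometricGraph

variable {n : ℕ}

def leftReachGraph (a : Fin n → ℕ) : SimpleGraph (Fin n) :=
  SimpleGraph.fromRel fun i j => i < j ∧ a j ≤ i

def leftReachStruct (a : Fin n → ℕ) : GraphStruct n :=
  Quotient.mk (isoSetoid n) (leftReachGraph a)

theorem lt_card_filter_Iio_iff {P : Fin n → Prop} [DecidablePred P]
    (hP : ∀ ⦃k k'⦄, k' ≤ k → P k → P k') {i j : Fin n} (hij : i < j) :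
    (i : ℕ) < #{k ∈ Iio j | P k} ↔ P i := by
  constructor
  · intro hlt
    by_contra hi
    have hsub : {k ∈ Iio j | P k} ⊆ Iio i := fun k hk =>
      mem_Iio.2 (lt_of_not_ge fun hik => hi (hP hik (mem_filter.1 hk).2))
    have := card_le_card hsub
    rw [Fin.card_Iio] at this
    omega
  · intro hi
    have hsub : Iic i ⊆ {k ∈ Iio j | P k} := fun k hk =>
      mem_filter.2 ⟨mem_Iio.2 ((mem_Iic.1 hk).trans_lt hij), hP (mem_Iic.1 hk) hi⟩
    have := card_le_card hsub
    rw [Fin.card_Iic] at this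
    omega

noncomputable def leftReach (r : ℝ) (y : Fin n → ℝ) (j : Fin n) : ℕ :=
  #{k ∈ Iio j | y k + r < y j}

variable {r : ℝ} {y : Fin n → ℝ}

theorem leftReach_mem_catalanSeqs (hy : Monotone y) : leftReach r y ∈ catalanSeqs n := by
  refine ⟨fun j j' hjj' => card_le_card fun k hk => ?_, fun j => ?_⟩
  · obtain ⟨hkj, hk⟩ := mem_filter.1 hk
    exact mem_filter.2 ⟨mem_Iio.2 ((mem_Iio.1 hkj).trans_le hjj'), hk.trans_le (hy hjj')⟩
  · exact (card_filter_le _ _).trans_eq (Fin.card_Iio j)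

theorem abs_sub_le_iff_leftReach_le (hy : Monotone y) {i j : Fin n} (hij : i < j) :
    |y i - y j| ≤ r ↔ leftReach r y j ≤ i := by
  rw [abs_sub_comm, abs_of_nonneg (sub_nonneg.2 (hy hij.le)), leftReach, ← not_lt (a := (i : ℕ)),
    lt_card_filter_Iio_iff (P := fun k => y k + r < y j)
      (fun k k' hkk' (hk : y k + r < y j) => by linarith [hy hkk']) hij,
    not_lt, sub_le_iff_le_add']

theorem graphOf_eq_leftReachGraph (hy : Monotone y) :
    graphOf r y = leftReachGraph (leftReach r y) := by
  ext i j
  simp only [leftReachGraph, SimpleGraph.fromRel_adj]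
  refine and_congr_right fun hij => ?_
  rcases hij.lt_or_gt with h | h
  · rw [abs_sub_le_iff_leftReach_le hy h]
    simp [h, h.asymm]
  · rw [abs_sub_comm, abs_sub_le_iff_leftReach_le hy h]
    simp [h, h.asymm]

theorem structOf_comp_perm (σ : Equiv.Perm (Fin n)) (x : Fin n → ℝ) :
    structOf r (x ∘ σ) = structOf r x :=
  Quotient.sound ⟨{ toEquiv := σ, map_rel_iff' := by simp [graphOf] }⟩

theorem structOf_eq_leftReachStruct (x : Fin n → ℝ) :
    structOf r x = leftReachStruct (leftReach r (x ∘ Tuple.sort x)) := by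
  rw [leftReachStruct, ← graphOf_eq_leftReachGraph (Tuple.monotone_sort x)]
  exact (structOf_comp_perm _ x).symm

theorem ncard_range_structOf_le_catalan :
    (Set.range (structOf (n := n) r)).ncard ≤ catalan n := by
  have hsub : Set.range (structOf (n := n) r) ⊆
      Set.range fun a : catalanSeqs n => leftReachStruct a.1 := by
    rintro _ ⟨x, rfl⟩
    exact ⟨⟨_, leftReach_mem_catalanSeqs (Tuple.monotone_sort x)⟩,
      (structOf_eq_leftReachStruct x).symm⟩
  calc (Set.range (structOf (n := n) r)).ncard
      ≤ (Set.range fun a : catalanSeqs n => leftReachStruct a.1).ncard :=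
        Set.ncard_le_ncard hsub (Set.toFinite _)
    _ ≤ Nat.card (catalanSeqs n) := Finite.card_range_le _
    _ ≤ catalan n := card_catalanSeqs_le

end GeometricGraph

theorem structural_entropy_upper_bound_general (n : ℕ) (hn : 1 ≤ n) (r : ℝ)
    {Ω : Type*} [MeasurableSpace Ω] (μ : Measure Ω) [IsProbabilityMeasure μ]
    (X : Ω → Fin n → ℝ)
    (hmeas : ∀ s : GraphStruct n, MeasurableSet {ω | structOf r (X ω) = s}) :
    {s : GraphStruct n | ∃ x : Fin n → ℝ, (∀ i, x i ∈ Set.Icc (0 : ℝ) 1) ∧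
        structOf r x = s}.ncard ≤ catalan n ∧
    -∑ s : GraphStruct n,
        (μ {ω | structOf r (X ω) = s}).toReal *
          Real.logb 2 (μ {ω | structOf r (X ω) = s}).toReal
      ≤ 2 * n - (3 / 2) * Real.logb 2 n - (1 / 2) * Real.logb 2 Real.pi := by
  have hrange := ncard_range_structOf_le_catalan (n := n) (r := r)
  refine ⟨(Set.ncard_le_ncard (by rintro _ ⟨x, -, rfl⟩; exact ⟨x, rfl⟩)).trans hrange, ?_⟩
  calc _ ≤ logb 2 (catalan n) :=
        neg_sum_measureReal_mul_logb_le one_lt_two (fun ω => structOf r (X ω)) hmeas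
          ((Set.ncard_le_ncard (Set.range_comp_subset_range X (structOf r))).trans hrange)
    _ ≤ _ := logb_catalan_le (by omega)

/-- for any `n ≥ 1`, any connection range `r > 0`, and any distribution of
the node locations in `[0,1]`, the number of distinct structures of 1D random geometric
graphs on `n` nodes is at most the `n`-th Catalan number, and the structural entropy
satisfies `H(S_{n,r}) ≤ 2n − (3/2)·log₂ n − (1/2)·log₂ π`. -/
theorem structural_entropy_upper_bound (n : ℕ) (hn : 1 ≤ n) (r : ℝ) (hr : 0 < r)
    {Ω : Type*} [MeasurableSpace Ω] (μ : Measure Ω) [IsProbabilityMeasure μ]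
    (X : Ω → Fin n → ℝ) (hX : ∀ ω i, X ω i ∈ Set.Icc (0 : ℝ) 1)
    (hmeas : ∀ s : GraphStruct n, MeasurableSet {ω | structOf r (X ω) = s}) :
    {s : GraphStruct n | ∃ x : Fin n → ℝ, (∀ i, x i ∈ Set.Icc (0 : ℝ) 1) ∧
        structOf r x = s}.ncard ≤ catalan n ∧
    -∑ s : GraphStruct n,
        (μ {ω | structOf r (X ω) = s}).toReal *
          Real.logb 2 (μ {ω | structOf r (X ω) = s}).toReal
      ≤ 2 * n - (3 / 2) * Real.logb 2 n - (1 / 2) * Real.logb 2 Real.pi :=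
  structural_entropy_upper_bound_general n hn r μ X hmeas
end

section
/- For all n ≥ 1, the central binomial coefficient satisfies C(2n, n) < 4^n / √(πn). -/
open Real Stirling Filter Topology

lemma sqrt_pi_lt_stirlingSeq (n : ℕ) : √π < stirlingSeq (n + 1) := by
  have htend : Tendsto (stirlingSeq ∘ Nat.succ) atTop (𝓝 (√π)) :=
    (Filter.tendsto_add_atTop_iff_nat 1).2 tendsto_stirlingSeq_sqrt_pi
  have h2 : √π ≤ stirlingSeq (n + 2) := stirlingSeq'_antitone.le_of_tendsto htend (n + 1)
  have hdiff : 0 < log (stirlingSeq (n + 1)) - log (stirlingSeq (n + 2)) := by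
    refine lt_of_lt_of_le ?_ (le_hasSum (log_stirlingSeq_diff_hasSum n) 0 (fun m _ => by positivity))
    positivity
  have hlt : stirlingSeq (n + 2) < stirlingSeq (n + 1) := by
    have h1 := stirlingSeq'_pos n
    have h2' := stirlingSeq'_pos (n + 1)
    exact (Real.log_lt_log_iff h2' h1).1 (by linarith)
  linarith

lemma factorial_eq_stirling (k : ℕ) (hk : 0 < k) :
    (Nat.factorial k : ℝ) = stirlingSeq k * (√(2 * k : ℝ) * ((k : ℝ) / exp 1) ^ k) := by
  have hd : (√(2 * k : ℝ) * ((k : ℝ) / exp 1) ^ k) ≠ 0 := by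
    have : (0:ℝ) < k := by exact_mod_cast hk
    positivity
  rw [stirlingSeq, div_mul_cancel₀ _ hd]

/-- for `n ≥ 1`, the central binomial coefficient satisfies
`C(2n,n) < 4^n / √(πn)`. -/
theorem centralBinom_lt (n : ℕ) (hn : 1 ≤ n) :
    ((2 * n).choose n : ℝ) < 4 ^ n / Real.sqrt (Real.pi * n) := by
  obtain ⟨m, rfl⟩ : ∃ m, n = m + 1 := ⟨n - 1, (Nat.succ_pred_eq_of_pos hn).symm⟩
  have hN0 : (0:ℝ) < (m:ℝ) + 1 := by positivity
  set s : ℝ := √((m:ℝ) + 1) with hsdef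
  have hs : 0 < s := Real.sqrt_pos.2 hN0
  have hs2 : s ^ 2 = (m:ℝ) + 1 := Real.sq_sqrt hN0.le
  set a := stirlingSeq (m + 1) with ha'
  set b := stirlingSeq (2 * (m + 1)) with hb'
  have ha : √π < a := sqrt_pi_lt_stirlingSeq m
  have hb : √π < b := by
    have := sqrt_pi_lt_stirlingSeq (2 * m + 1)
    rwa [show 2 * m + 1 + 1 = 2 * (m + 1) by ring] at this
  have hba : b ≤ a := by
    have := stirlingSeq'_antitone (show m ≤ 2 * m + 1 by omega)
    simpa [Function.comp, show 2 * m + 1 + 1 = 2 * (m + 1) by ring] using this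
  have hapos : 0 < a := stirlingSeq'_pos m
  have hbpos : 0 < b := lt_trans (by positivity) hb
  have hpi : (0:ℝ) < √π := Real.sqrt_pos.2 Real.pi_pos
  set X : ℝ := (((m:ℝ) + 1) / exp 1) ^ (m + 1) with hX'
  have hX : 0 < X := by positivity
  -- factorial identities
  have hf1 : (Nat.factorial (m + 1) : ℝ) = a * (√(2 * ((m:ℝ) + 1)) * X) := by
    have := factorial_eq_stirling (m + 1) (by omega)
    push_cast at this
    rw [hX']
    exact this
  have hsq1 : √(2 * ((m:ℝ) + 1)) ^ 2 = 2 * ((m:ℝ) + 1) := Real.sq_sqrt (by positivity)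
  have hsq2 : √(2 * ((2:ℝ) * ((m:ℝ) + 1))) = 2 * s := by
    rw [show 2 * ((2:ℝ) * ((m:ℝ)+1)) = 2 ^ 2 * ((m:ℝ)+1) by ring,
      Real.sqrt_mul (by positivity), Real.sqrt_sq (by norm_num)]
  have hpow : ((2:ℝ) * (((m:ℝ) + 1) / exp 1)) ^ (2 * (m + 1)) = 4 ^ (m + 1) * X ^ 2 := by
    rw [hX', mul_pow, ← pow_mul ((((m:ℝ)+1)) / exp 1) (m+1) 2, mul_comm (m+1) 2,
      show (4:ℝ) = 2 ^ 2 by norm_num, ← pow_mul 2 2 (m+1)]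
  have hf2 : (Nat.factorial (2 * (m + 1)) : ℝ) = b * (2 * s * (4 ^ (m + 1) * X ^ 2)) := by
    have := factorial_eq_stirling (2 * (m + 1)) (by omega)
    push_cast at this
    rw [this, show (2:ℝ) * (↑m + 1) / exp 1 = 2 * ((↑m + 1) / exp 1) by ring, hpow, ← hsq2]
  have hchoose : ((2 * (m + 1)).choose (m + 1) : ℝ) *
      (Nat.factorial (m + 1) : ℝ) * (Nat.factorial (m + 1) : ℝ)
      = (Nat.factorial (2 * (m + 1)) : ℝ) := by
    have h := Nat.choose_mul_factorial_mul_factorial (show m + 1 ≤ 2 * (m + 1) by omega)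
    rw [show 2 * (m + 1) - (m + 1) = m + 1 by omega] at h
    exact_mod_cast h
  set C : ℝ := ((2 * (m + 1)).choose (m + 1) : ℝ) with hC'
  have hC : C * (a ^ 2 * s) = b * 4 ^ (m + 1) := by
    have h2NX : (2 * ((m:ℝ) + 1) * X ^ 2) ≠ 0 := by positivity
    refine mul_right_cancel₀ h2NX ?_
    calc (C * (a ^ 2 * s)) * (2 * ((m:ℝ) + 1) * X ^ 2)
        = (C * (Nat.factorial (m + 1) : ℝ) * (Nat.factorial (m + 1) : ℝ)) * s := by
          rw [hf1]; linear_combination -(C * a ^ 2 * s * X ^ 2) * hsq1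
      _ = (Nat.factorial (2 * (m + 1)) : ℝ) * s := by rw [hchoose]
      _ = (b * (2 * s * (4 ^ (m + 1) * X ^ 2))) * s := by rw [hf2]
      _ = (b * 4 ^ (m + 1)) * (s ^ 2 * (2 * X ^ 2)) := by ring
      _ = (b * 4 ^ (m + 1)) * (2 * ((m:ℝ) + 1) * X ^ 2) := by rw [hs2]; ring
  have hCdiv : C = b * 4 ^ (m + 1) / (a ^ 2 * s) := (eq_div_iff (by positivity)).2 hC
  have hcast : Real.sqrt (π * ((m + 1 : ℕ) : ℝ)) = √π * s := by
    rw [hsdef, ← Real.sqrt_mul Real.pi_pos.le]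
    push_cast
    ring_nf
  rw [hCdiv, hcast, div_lt_div_iff₀ (by positivity) (by positivity)]
  have hkey : b * √π < a ^ 2 := by nlinarith
  nlinarith [mul_lt_mul_of_pos_left hkey (mul_pos (show (0:ℝ) < 4 ^ (m+1) by positivity) hs)]
end

section
/- Let X_1,...,X_n be i.i.d. uniform on [0,1] with order statistics X_(1) ≤ ... ≤ X_(n). For r < 1/2, 2 ≤ i ≤ n−1, and 0 ≤ a ≤ i−2, the probability that node i has exactly a leftward neighbors and node i+1 has 0 leftward neighbors in the ordered geometric graph with range r equals C(n,a)·r^a·(1−2r)^{n−a}. -/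
open MeasureTheory

/-- The `k`-th order statistic (1-based, `k`-th smallest) of the values `x`. -/
noncomputable def ordStat {n : ℕ} (x : Fin n → ℝ) (k : ℕ) : ℝ :=
  (List.insertionSort (· ≤ ·) (List.ofFn x)).getD (k - 1) 0

/-- `L_i`: the number of leftward neighbours of node `i` (1-based) in the ordered
geometric graph with connection range `r`: indices `j < i` with `X_(i) − X_(j) ≤ r`. -/
noncomputable def Lcount {n : ℕ} (r : ℝ) (x : Fin n → ℝ) (i : ℕ) : ℕ :=
  ((Finset.Ico 1 i).filter (fun j => ordStat x i - ordStat x j ≤ r)).card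

/-!
Both counts only depend on how many points lie below a threshold: `L_i = i - 1 - #{x_j < X_(i) - r}`
and `L_{i+1} = 0` iff at most `i` points lie in `[0, X_(i) + r]`. Hence, off the null set where two
coordinates coincide, the event is the disjoint union of the cells `cell r k A B`: the pivot `k`
carries `X_(i) = t`, the `p = i - 1 - a` points of `A` lie in `[0, t - r)`, the `a` points of `B`
in `[t - r, t)` and the remaining `q = n - i` points in `(t + r, 1]`. As `p, q ≥ 1`, the pivot lies
in `[r, 1 - r]`, and integrating over it gives the volume
`r^a ∫ (t - r)^p (1 - r - t)^q dt = r^a p! q! / (p + q + 1)! (1 - 2r)^(n - a)` for every cell.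
For a fixed `B` there are `(p + q + 1) C(p + q, p)` choices of `(k, A)`, which cancels the beta
factor, and there are `C(n, a)` choices of `B`.
-/

open Finset

theorem List.Pairwise.getElem_iff_lt_countP {α : Type*} [Preorder α] {p : α → Prop}
    [DecidablePred p] (hp : ∀ ⦃y z⦄, y ≤ z → p z → p y) :
    ∀ {l : List α}, l.Pairwise (· ≤ ·) → ∀ {m : ℕ} (hm : m < l.length),
      p l[m] ↔ m < l.countP p
  | [], _, _, hm => absurd hm (Nat.not_lt_zero _)
  | a :: l, hl, m, hm => by
    rw [List.pairwise_cons] at hl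
    by_cases ha : p a
    · rw [List.countP_cons_of_pos (by simpa using ha)]
      cases m with
      | zero => simpa using ha
      | succ m => simpa using hl.2.getElem_iff_lt_countP hp (m := m) (by simpa using hm)
    · have hnone : l.countP p = 0 := List.countP_eq_zero.mpr fun z hz hpz =>
        ha (hp (hl.1 z hz) (by simpa using hpz))
      rw [List.countP_cons_of_neg (by simpa using ha), hnone]
      cases m with
      | zero => simpa using ha
      | succ m =>
        simp only [List.getElem_cons_succ, Nat.not_lt_zero, iff_false]
        exact fun h => ha (hp (hl.1 _ (List.getElem_mem _)) h)

theorem List.countP_ofFn {α : Type*} {n : ℕ} (x : Fin n → α) (p : α → Prop) [DecidablePred p] :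
    (List.ofFn x).countP p = #{j | p (x j)} := by
  rw [← Multiset.coe_countP, ← Fin.univ_val_map, Multiset.countP_map, Finset.card_def,
    Finset.filter_val]

section OrderStatistics

variable {n : ℕ} (x : Fin n → ℝ)

theorem ordStat_succ_prop_iff {p : ℝ → Prop} [DecidablePred p]
    (hp : ∀ ⦃y z⦄, y ≤ z → p z → p y) {m : ℕ} (hm : m < n) :
    p (ordStat x (m + 1)) ↔ m < #{j | p (x j)} := by
  have hlen : m < (List.insertionSort (· ≤ ·) (List.ofFn x)).length := by simpa using hm
  rw [ordStat, Nat.add_sub_cancel, List.getD_eq_getElem _ _ hlen,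
    (List.pairwise_insertionSort _ _).getElem_iff_lt_countP hp hlen,
    (List.perm_insertionSort _ _).countP_eq, List.countP_ofFn]

theorem ordStat_succ_lt_iff {m : ℕ} (hm : m < n) (c : ℝ) :
    ordStat x (m + 1) < c ↔ m < #{j | x j < c} :=
  ordStat_succ_prop_iff x (fun _ _ => lt_of_le_of_lt) hm

theorem ordStat_succ_le_iff {m : ℕ} (hm : m < n) (c : ℝ) :
    ordStat x (m + 1) ≤ c ↔ m < #{j | x j ≤ c} :=
  ordStat_succ_prop_iff x (fun _ _ => le_trans) hm

theorem ordStat_succ_eq_of_card {m : ℕ} {c : ℝ} (hlt : #{j | x j < c} ≤ m)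
    (hle : m < #{j | x j ≤ c}) : ordStat x (m + 1) = c := by
  have hm : m < n := hle.trans_le ((card_filter_le _ _).trans_eq (card_fin n))
  exact le_antisymm ((ordStat_succ_le_iff x hm c).2 hle)
    (not_lt.1 fun h => (ordStat_succ_lt_iff x hm c |>.1 h).not_ge hlt)

theorem ordStat_card_filter_lt_succ (k : Fin n) : ordStat x (#{j | x j < x k} + 1) = x k := by
  refine ordStat_succ_eq_of_card x le_rfl (card_lt_card ⟨?_, fun h => ?_⟩)
  · exact monotone_filter_right _ fun _ _ => le_of_lt
  · simpa using h (by simp : k ∈ ({j | x j ≤ x k} : Finset (Fin n)))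

theorem exists_eq_ordStat_succ {m : ℕ} (hm : m < n) : ∃ k, x k = ordStat x (m + 1) := by
  have hlen : m < (List.insertionSort (· ≤ ·) (List.ofFn x)).length := by simpa using hm
  have hmem := (List.perm_insertionSort (· ≤ ·) (List.ofFn x)).subset (List.getElem_mem hlen)
  rw [ordStat, Nat.add_sub_cancel, List.getD_eq_getElem _ _ hlen]
  simpa using hmem

theorem card_lt_ordStat_succ (hx : Function.Injective x) {m : ℕ} (hm : m < n) :
    #{j | x j < ordStat x (m + 1)} = m := by
  obtain ⟨k, hk⟩ := exists_eq_ordStat_succ x hm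
  have hle : #{j | x j ≤ ordStat x (m + 1)} = #{j | x j < ordStat x (m + 1)} + 1 := by
    rw [← card_insert_of_notMem (s := {j | x j < ordStat x (m + 1)}) (a := k) (by simp [hk])]
    congr 1
    ext j
    simp only [mem_filter, mem_univ, true_and, mem_insert]
    rw [le_iff_lt_or_eq, ← hk, hx.eq_iff, or_comm]
  have h1 := (ordStat_succ_le_iff x hm _).1 le_rfl
  have h2 := (ordStat_succ_lt_iff x hm _).not.1 (lt_irrefl _)
  omega

theorem Lcount_eq_sub_card {r : ℝ} {i : ℕ} (hi : i ≤ n) :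
    Lcount r x i = i - 1 - #{j | x j < ordStat x i - r} := by
  have hmem : ∀ m ∈ Ico 1 i,
      (ordStat x i - ordStat x m ≤ r ↔ #{j | x j < ordStat x i - r} + 1 ≤ m) := by
    intro m hm
    obtain ⟨m, rfl⟩ : ∃ m', m = m' + 1 := ⟨m - 1, by simp at hm; omega⟩
    rw [sub_le_comm, ← not_lt, ordStat_succ_lt_iff x (by simp at hm; omega)]
    omega
  rw [Lcount, filter_congr hmem, Ico_filter_le, Nat.card_Ico]
  omega

theorem Lcount_succ_eq_zero_iff {r : ℝ} {i : ℕ} (hi : 1 ≤ i) (hin : i < n) :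
    Lcount r x (i + 1) = 0 ↔ #{j | x j ≤ ordStat x i + r} ≤ i := by
  obtain ⟨m, rfl⟩ : ∃ m, i = m + 1 := ⟨i - 1, by omega⟩
  rw [Lcount_eq_sub_card x (i := m + 1 + 1) hin, ← not_lt, ← ordStat_succ_le_iff x hin, not_le,
    ← lt_sub_iff_add_lt, ordStat_succ_lt_iff x (by omega)]
  omega

end OrderStatistics

section Rank

variable {ι : Type*} [Fintype ι] {x : ι → ℝ} {k k' : ι}

theorem card_filter_lt_lt_of_lt (h : x k < x k') : #{j | x j < x k} < #{j | x j < x k'} := by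
  refine card_lt_card ⟨fun j hj => ?_, fun hsub => ?_⟩
  · simp only [mem_filter, mem_univ, true_and] at hj ⊢
    exact hj.trans h
  · simpa using hsub (by simpa using h : k ∈ ({j | x j < x k'} : Finset ι))

theorem eq_of_card_filter_lt_eq (h : #{j | x j < x k} = #{j | x j < x k'}) : x k = x k' := by
  rcases lt_trichotomy (x k) (x k') with hlt | heq | hgt
  · exact absurd h (card_filter_lt_lt_of_lt hlt).ne
  · exact heq
  · exact absurd h (card_filter_lt_lt_of_lt hgt).ne'

theorem add_lt_of_card_filter_le [DecidableEq ι] {r : ℝ}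
    (hle : #{j | x j ≤ x k + r} ≤ #{j | x j < x k} + 1) {j : ι} (hj : x k < x j) :
    x k + r < x j := by
  by_contra! hjr
  have hsub : insert j (insert k ({j | x j < x k} : Finset ι))
      ⊆ ({j | x j ≤ x k + r} : Finset ι) := by
    intro l hl
    simp only [mem_insert, mem_filter, mem_univ, true_and] at hl ⊢
    rcases hl with rfl | rfl | hl <;> linarith
  have := card_le_card hsub
  rw [card_insert_of_notMem (by simp [ne_of_apply_ne x hj.ne', hj.le.not_gt]),
    card_insert_of_notMem (by simp)] at this
  omega

end Rank

theorem volume_setOf_apply_eq_apply {ι : Type*} [Fintype ι] {j j' : ι} (h : j ≠ j') :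
    volume {x : ι → ℝ | x j = x j'} = 0 := by
  classical
  let f : (ι → ℝ) →ₗ[ℝ] ℝ := LinearMap.proj (R := ℝ) (φ := fun _ => ℝ) j - LinearMap.proj j'
  have hker : {x : ι → ℝ | x j = x j'} = LinearMap.ker f := by
    ext x
    simp [f, sub_eq_zero]
  rw [hker]
  refine Measure.addHaar_submodule _ _ fun htop => ?_
  have : Pi.single j (1 : ℝ) ∈ LinearMap.ker f := htop ▸ Submodule.mem_top
  simp [f, h.symm] at this

theorem ae_injective {ι : Type*} [Fintype ι] : ∀ᵐ x : ι → ℝ, Function.Injective x := by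
  have hnull : volume (⋃ j, ⋃ j', ⋃ (_ : j ≠ j'), {x : ι → ℝ | x j = x j'}) = 0 :=
    measure_iUnion_null fun j => measure_iUnion_null fun j' =>
      measure_iUnion_null fun h => volume_setOf_apply_eq_apply h
  refine measure_mono_null (fun x hx => ?_) hnull
  obtain ⟨j, j', hxj, hne⟩ : ∃ j j', x j = x j' ∧ j ≠ j' := by
    simpa [Function.Injective] using hx
  simp only [Set.mem_iUnion]
  exact ⟨j, j', hne, hxj⟩

open Nat in
theorem integral_pow_mul_sub_pow (s : ℝ) (p q : ℕ) :
    ∫ u in (0 : ℝ)..s, u ^ p * (s - u) ^ q = p ! * q ! / (p + q + 1)! * s ^ (p + q + 1) := by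
  induction q generalizing p with
  | zero =>
    simp only [pow_zero, mul_one, integral_pow, factorial_zero, add_zero,
      factorial_succ, Nat.cast_mul, Nat.cast_succ]
    field_simp
    ring
  | succ q ih =>
    have hu : ∀ u ∈ Set.uIcc 0 s, HasDerivAt (fun u => (s - u) ^ (q + 1))
        (-((q + 1 : ℝ) * (s - u) ^ q)) u := by
      intro u _
      refine ((hasDerivAt_pow (q + 1) (s - u)).comp u
        ((hasDerivAt_id' u).const_sub s)).congr_deriv ?_
      push_cast
      ring
    have hv : ∀ u ∈ Set.uIcc 0 s,
        HasDerivAt (fun u : ℝ => u ^ (p + 1) / (p + 1)) (u ^ p) u := by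
      intro u _
      refine ((hasDerivAt_pow (p + 1) u).div_const ((p : ℝ) + 1)).congr_deriv ?_
      push_cast
      field_simp
    have hparts := intervalIntegral.integral_mul_deriv_eq_deriv_mul hu hv
      (by apply Continuous.intervalIntegrable; fun_prop)
      (by apply Continuous.intervalIntegrable; fun_prop)
    simp only [sub_self, zero_pow (succ_ne_zero _), zero_mul, sub_zero, zero_div,
      mul_zero] at hparts
    have hinner : ∫ u in (0 : ℝ)..s, -((q + 1 : ℝ) * (s - u) ^ q) * (u ^ (p + 1) / (p + 1))
        = -((q + 1) / (p + 1)) * ∫ u in (0 : ℝ)..s, u ^ (p + 1) * (s - u) ^ q := by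
      rw [← intervalIntegral.integral_const_mul]
      congr 1 with u
      field_simp
    rw [intervalIntegral.integral_congr fun u _ => mul_comm (u ^ p) ((s - u) ^ (q + 1)), hparts,
      hinner, ih, show p + 1 + q + 1 = p + (q + 1) + 1 by ring]
    simp only [factorial_succ, Nat.cast_mul, Nat.cast_succ]
    field_simp
    ring

open Nat in
theorem add_one_mul_choose_mul_factorial_div_factorial (p q : ℕ) :
    (((p + q + 1) * (p + q).choose p : ℕ) : ℝ) * (p ! * q ! / (p + q + 1)!) = 1 := by
  have hfac : ((p + q).choose p : ℝ) * p ! * q ! = (p + q)! := by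
    exact_mod_cast Nat.add_sub_cancel_left p q ▸
      Nat.choose_mul_factorial_mul_factorial (Nat.le_add_right p q)
  have hchoose : ((p + q).choose p : ℝ) ≠ 0 := by
    exact_mod_cast (Nat.choose_pos (Nat.le_add_right p q)).ne'
  rw [Nat.factorial_succ]
  push_cast
  rw [← hfac]
  field_simp

theorem measure_biUnion_finset_of_forall_eq {α β : Type*} [MeasurableSpace β] {μ : Measure β}
    {s : Finset α} {f : α → Set β} {c : ENNReal} (hd : (s : Set α).PairwiseDisjoint f)
    (hm : ∀ i ∈ s, MeasurableSet (f i)) (hc : ∀ i ∈ s, μ (f i) = c) :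
    μ (⋃ i ∈ s, f i) = #s * c := by
  rw [measure_biUnion_finset hd hm, sum_congr rfl hc, sum_const, nsmul_eq_mul]

section PivotBox

variable {ι : Type*} {k : ι} {T : Set ℝ} {S : ι → ℝ → Set ℝ}

def pivotBox (k : ι) (T : Set ℝ) (S : ι → ℝ → Set ℝ) : Set (ι → ℝ) :=
  {x | x k ∈ T ∧ ∀ j ≠ k, x j ∈ S j (x k)}

theorem measurableSet_pivotSlab [Countable ι] (hT : MeasurableSet T)
    (hS : ∀ j, MeasurableSet {p : ℝ × ℝ | p.2 ∈ S j p.1}) :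
    MeasurableSet
      {p : ℝ × ({j // j ≠ k} → ℝ) | p.1 ∈ T ∧ ∀ j : {j // j ≠ k}, p.2 j ∈ S j p.1} := by
  simp only [Set.ofPred_and, Set.ofPred_forall]
  exact (measurable_fst hT).inter (MeasurableSet.iInter fun j =>
    (hS j).preimage (measurable_fst.prodMk ((measurable_pi_apply j).comp measurable_snd)))

variable [DecidableEq ι]

def pivotSplit (k : ι) : (ι → ℝ) ≃ᵐ ℝ × ({j // j ≠ k} → ℝ) :=
  (MeasurableEquiv.piEquivPiSubtypeProd (fun _ => ℝ) (· = k)).trans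
    ((MeasurableEquiv.funUnique _ ℝ).prodCongr (MeasurableEquiv.refl _))

theorem pivotSplit_preimage :
    pivotSplit k ⁻¹' {p | p.1 ∈ T ∧ ∀ j : {j // j ≠ k}, p.2 j ∈ S j p.1} = pivotBox k T S := by
  ext x
  simp only [pivotBox, Set.mem_preimage, Set.mem_ofPred_eq, Subtype.forall]
  rfl

variable [Fintype ι]

theorem measurePreserving_pivotSplit (k : ι) :
    MeasurePreserving (pivotSplit k) volume volume := by
  refine ((volume_preserving_funUnique {j // j = k} ℝ).prod (.id volume)).comp ?_
  -- the two sides carry different (but equal) `Fintype` instances on `{j // j = k}`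
  convert volume_preserving_piEquivPiSubtypeProd (fun _ : ι => ℝ) (· = k) using 3
  · rfl
  · rfl
  · congr
    exact Subsingleton.elim _ _

theorem measurableSet_pivotBox (hT : MeasurableSet T)
    (hS : ∀ j, MeasurableSet {p : ℝ × ℝ | p.2 ∈ S j p.1}) :
    MeasurableSet (pivotBox k T S) :=
  pivotSplit_preimage (k := k) ▸ (pivotSplit k).measurable (measurableSet_pivotSlab hT hS)

theorem volume_pivotBox (hT : MeasurableSet T)
    (hS : ∀ j, MeasurableSet {p : ℝ × ℝ | p.2 ∈ S j p.1}) :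
    volume (pivotBox k T S) = ∫⁻ t in T, ∏ j ∈ univ.erase k, volume (S j t) := by
  rw [← pivotSplit_preimage, (measurePreserving_pivotSplit k).measure_preimage
    (measurableSet_pivotSlab hT hS).nullMeasurableSet, Measure.volume_eq_prod,
    Measure.prod_apply (measurableSet_pivotSlab hT hS), ← lintegral_indicator hT]
  congr 1 with t
  by_cases ht : t ∈ T
  · have : Prod.mk t ⁻¹'
          {p : ℝ × ({j // j ≠ k} → ℝ) | p.1 ∈ T ∧ ∀ j : {j // j ≠ k}, p.2 j ∈ S j p.1}
        = Set.univ.pi fun j : {j // j ≠ k} => S j t := by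
      ext y
      simp [ht]
    rw [Set.indicator_of_mem ht, this, volume_pi_pi]
    exact (prod_subtype (univ.erase k) (by simp) (fun j => volume (S j t))).symm
  · simp [ht]

end PivotBox

section Cells

variable {ι : Type*} [DecidableEq ι] {r : ℝ} {k j : ι} {A B : Finset ι} {x : ι → ℝ}

def band (r : ℝ) (A B : Finset ι) (j : ι) (t : ℝ) : Set ℝ :=
  if j ∈ A then Set.Ico 0 (t - r) else if j ∈ B then Set.Ico (t - r) t else Set.Ioc (t + r) 1

def cell (r : ℝ) (k : ι) (A B : Finset ι) : Set (ι → ℝ) :=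
  pivotBox k (Set.Icc r (1 - r)) (band r A B)

theorem measurableSet_band (j : ι) : MeasurableSet {p : ℝ × ℝ | p.2 ∈ band r A B j p.1} := by
  unfold band
  split_ifs
  · exact (measurableSet_le measurable_const measurable_snd).inter
      (measurableSet_lt measurable_snd (measurable_fst.sub_const r))
  · exact (measurableSet_le (measurable_fst.sub_const r) measurable_snd).inter
      (measurableSet_lt measurable_snd measurable_fst)
  · exact (measurableSet_lt (measurable_fst.add_const r) measurable_snd).inter
      (measurableSet_le measurable_snd measurable_const)

theorem lt_sub_of_mem_cell (hx : x ∈ cell r k A B) (hjk : j ≠ k) (hj : j ∈ A) :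
    x j < x k - r := by
  have := hx.2 j hjk
  simp only [band, if_pos hj] at this
  exact this.2

theorem mem_Ico_of_mem_cell (hx : x ∈ cell r k A B) (hkB : k ∉ B) (hjA : j ∉ A) (hj : j ∈ B) :
    x k - r ≤ x j ∧ x j < x k := by
  have := hx.2 j (by rintro rfl; exact hkB hj)
  simpa only [band, if_neg hjA, if_pos hj, Set.mem_Ico] using this

theorem add_lt_of_mem_cell (hx : x ∈ cell r k A B) (hjk : j ≠ k) (hjA : j ∉ A) (hjB : j ∉ B) :
    x k + r < x j := by
  have := hx.2 j hjk
  simp only [band, if_neg hjA, if_neg hjB] at this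
  exact this.1

theorem mem_Icc_of_mem_cell (hr : 0 ≤ r) (hx : x ∈ cell r k A B) (j : ι) :
    x j ∈ Set.Icc (0 : ℝ) 1 := by
  obtain ⟨⟨hk0, hk1⟩, hband⟩ := hx
  by_cases hjk : j = k
  · subst hjk
    constructor <;> linarith
  have := hband j hjk
  unfold band at this
  split_ifs at this <;> (simp only [Set.mem_Ico, Set.mem_Ioc] at this; constructor <;> linarith)

variable [Fintype ι]

theorem measurableSet_cell : MeasurableSet (cell r k A B) :=
  measurableSet_pivotBox measurableSet_Icc measurableSet_band

theorem prod_volume_band (hr : 0 ≤ r) {t : ℝ} (ht : t ∈ Set.Icc r (1 - r)) (hkB : k ∉ B)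
    (hA : A ⊆ Bᶜ.erase k) :
    ∏ j ∈ univ.erase k, volume (band r A B j t) = ENNReal.ofReal
      (r ^ #B * ((t - r) ^ #A * (1 - r - t) ^ (Fintype.card ι - 1 - #A - #B))) := by
  have hvol : ∀ j, volume (band r A B j t) = if j ∈ A then ENNReal.ofReal (t - r)
      else if j ∈ B then ENNReal.ofReal r else ENNReal.ofReal (1 - r - t) := by
    intro j
    unfold band
    split_ifs <;> simp only [Real.volume_Ico, Real.volume_Ioc] <;> ring_nf
  have hAk : A ⊆ univ.erase k := hA.trans (erase_subset_erase _ (subset_univ _))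
  have hBk : B ⊆ (univ.erase k) \ A := fun j hj => by
    simp only [mem_sdiff, mem_erase, mem_univ, and_true]
    exact ⟨fun h => hkB (h ▸ hj), fun h => by simpa [hj] using hA h⟩
  have hC : #((univ.erase k \ A) \ B) = Fintype.card ι - 1 - #A - #B := by
    rw [card_sdiff_of_subset hBk, card_sdiff_of_subset hAk, card_erase_of_mem (mem_univ _),
      card_univ]
  rw [prod_congr rfl fun j _ => hvol j, prod_ite, prod_ite, prod_const, prod_const, prod_const,
    filter_mem_eq_inter, filter_notMem_eq_sdiff, filter_mem_eq_inter, filter_notMem_eq_sdiff,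
    inter_eq_right.2 hAk, inter_eq_right.2 hBk, hC, ← ENNReal.ofReal_pow hr,
    ← ENNReal.ofReal_pow (sub_nonneg.2 ht.1), ← ENNReal.ofReal_pow (by linarith [ht.2]),
    ← ENNReal.ofReal_mul (pow_nonneg hr _),
    ← ENNReal.ofReal_mul (pow_nonneg (sub_nonneg.2 ht.1) _)]
  ring_nf

open Nat in
theorem volume_cell (hr0 : 0 ≤ r) (hr : r ≤ 1 / 2) (hkB : k ∉ B) (hA : A ⊆ Bᶜ.erase k)
    {p a q : ℕ} (hp : #A = p) (ha : #B = a) (hcard : Fintype.card ι = p + a + q + 1) :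
    volume (cell r k A B)
      = ENNReal.ofReal (r ^ a * (p ! * q ! / (p + q + 1)! * (1 - 2 * r) ^ (p + q + 1))) := by
  have hq : Fintype.card ι - 1 - #A - #B = q := by omega
  have hint : ∀ t ∈ Set.Icc r (1 - r), 0 ≤ r ^ a * ((t - r) ^ p * (1 - r - t) ^ q) :=
    fun t ht => by have := ht.1; have := ht.2; positivity
  rw [cell, volume_pivotBox measurableSet_Icc measurableSet_band,
    setLIntegral_congr_fun measurableSet_Icc fun t ht => prod_volume_band hr0 ht hkB hA,
    hq, hp, ha, ← ofReal_integral_eq_lintegral_ofReal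
      (Continuous.integrableOn_Icc (by fun_prop))
      (ae_restrict_of_forall_mem measurableSet_Icc hint),
    integral_const_mul, integral_Icc_eq_integral_Ioc,
    ← intervalIntegral.integral_of_le (by linarith)]
  have hshift : ∀ t : ℝ,
      (t - r) ^ p * (1 - r - t) ^ q = (t - r) ^ p * ((1 - 2 * r) - (t - r)) ^ q :=
    fun t => by ring_nf
  simp_rw [hshift]
  rw [intervalIntegral.integral_comp_sub_right (fun u => u ^ p * ((1 - 2 * r) - u) ^ q), sub_self,
    show 1 - r - r = 1 - 2 * r by ring, integral_pow_mul_sub_pow]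

theorem filter_lt_sub_of_mem_cell (hr : 0 ≤ r) (hx : x ∈ cell r k A B) (hkB : k ∉ B)
    (hA : A ⊆ Bᶜ.erase k) : ({j | x j < x k - r} : Finset ι) = A := by
  ext j
  simp only [mem_filter, mem_univ, true_and]
  refine ⟨fun hj => ?_, fun hj => lt_sub_of_mem_cell hx (ne_of_mem_erase (hA hj)) hj⟩
  by_contra hjA
  by_cases hjB : j ∈ B
  · linarith [(mem_Ico_of_mem_cell hx hkB hjA hjB).1]
  by_cases hjk : j = k
  · subst hjk
    linarith
  · linarith [add_lt_of_mem_cell hx hjk hjA hjB]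

theorem filter_lt_of_mem_cell (hr : 0 ≤ r) (hx : x ∈ cell r k A B) (hkB : k ∉ B)
    (hA : A ⊆ Bᶜ.erase k) : ({j | x j < x k} : Finset ι) = A ∪ B := by
  ext j
  simp only [mem_filter, mem_univ, true_and, mem_union]
  constructor
  · intro hj
    by_contra! hjAB
    by_cases hjk : j = k
    · subst hjk
      linarith
    · linarith [add_lt_of_mem_cell hx hjk hjAB.1 hjAB.2]
  · rintro (hjA | hjB)
    · linarith [lt_sub_of_mem_cell hx (ne_of_mem_erase (hA hjA)) hjA]
    · by_cases hjA : j ∈ A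
      · linarith [lt_sub_of_mem_cell hx (ne_of_mem_erase (hA hjA)) hjA]
      · exact (mem_Ico_of_mem_cell hx hkB hjA hjB).2

theorem filter_le_add_of_mem_cell (hr : 0 ≤ r) (hx : x ∈ cell r k A B) (hkB : k ∉ B)
    (hA : A ⊆ Bᶜ.erase k) : ({j | x j ≤ x k + r} : Finset ι) = insert k (A ∪ B) := by
  ext j
  have hlt := filter_lt_of_mem_cell hr hx hkB hA
  rw [Finset.ext_iff] at hlt
  simp only [mem_filter, mem_univ, true_and, mem_insert] at hlt ⊢
  constructor
  · intro hj
    by_contra! hjkAB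
    have hjAB : j ∉ A ∪ B := hjkAB.2
    simp only [mem_union, not_or] at hjAB
    linarith [add_lt_of_mem_cell hx hjkAB.1 hjAB.1 hjAB.2]
  · rintro (rfl | hj)
    · linarith
    · linarith [(hlt j).2 hj]

theorem eq_of_mem_cell_of_mem_cell {k' : ι} {A' B' : Finset ι} (hr : 0 ≤ r)
    (hx : x ∈ cell r k A B) (hx' : x ∈ cell r k' A' B') (hkB : k ∉ B) (hA : A ⊆ Bᶜ.erase k)
    (hkB' : k' ∉ B') (hA' : A' ⊆ B'ᶜ.erase k') (hcard : #A + #B = #A' + #B') :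
    k = k' ∧ A = A' ∧ B = B' := by
  have hdisj : Disjoint A B := subset_compl_iff_disjoint_right.1 (hA.trans (erase_subset _ _))
  have hdisj' : Disjoint A' B' :=
    subset_compl_iff_disjoint_right.1 (hA'.trans (erase_subset _ _))
  have hlt := filter_lt_of_mem_cell hr hx hkB hA
  have hlt' := filter_lt_of_mem_cell hr hx' hkB' hA'
  have hxk : x k = x k' := eq_of_card_filter_lt_eq (by
    rw [hlt, hlt', card_union_of_disjoint hdisj, card_union_of_disjoint hdisj', hcard])
  have hk : k = k' := by
    by_contra hne
    have hk' : k' ∈ ({j | x j ≤ x k + r} : Finset ι) := by simp [hxk, hr]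
    rw [filter_le_add_of_mem_cell hr hx hkB hA, mem_insert, ← hlt] at hk'
    simp [Ne.symm hne, hxk] at hk'
  subst hk
  have hAA : A = A' := (filter_lt_sub_of_mem_cell hr hx hkB hA).symm.trans
    (filter_lt_sub_of_mem_cell hr hx' hkB' hA')
  subst hAA
  refine ⟨rfl, rfl, ?_⟩
  rw [← union_sdiff_cancel_left hdisj, ← hlt, hlt', union_sdiff_cancel_left hdisj']

theorem mem_cell_of_card_filter_le (hx : Function.Injective x)
    (hcube : ∀ j, x j ∈ Set.Icc (0 : ℝ) 1) (hA : ({j | x j < x k - r} : Finset ι).Nonempty)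
    (hle : #{j | x j ≤ x k + r} ≤ #{j | x j < x k} + 1)
    (hC : #{j | x j ≤ x k + r} < Fintype.card ι) :
    x ∈ cell r k {j | x j < x k - r}
      (({j | x j < x k} : Finset ι) \ ({j | x j < x k - r} : Finset ι)) := by
  refine ⟨⟨?_, ?_⟩, fun j hjk => ?_⟩
  · obtain ⟨j, hj⟩ := hA
    simp only [mem_filter, mem_univ, true_and] at hj
    linarith [(hcube j).1]
  · obtain ⟨j, -, hj⟩ := exists_mem_notMem_of_card_lt_card (t := univ) (by simpa using hC)
    simp only [mem_filter, mem_univ, true_and, not_le] at hj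
    linarith [(hcube j).2]
  unfold band
  split_ifs with hjA hjB
  · exact ⟨(hcube j).1, by simpa using hjA⟩
  · simp only [mem_sdiff, mem_filter, mem_univ, true_and] at hjA hjB
    exact ⟨not_lt.1 hjA, hjB.1⟩
  · have hjk' : x k < x j := by
      by_contra! hjk'
      refine hjB (mem_sdiff.2 ⟨?_, hjA⟩)
      simpa using hjk'.lt_of_ne (hx.ne hjk)
    exact ⟨add_lt_of_card_filter_le hle hjk', (hcube j).2⟩

variable (ι) in
def cellUnion (r : ℝ) (p a : ℕ) : Set (ι → ℝ) :=
  ⋃ B ∈ powersetCard a (univ : Finset ι), ⋃ k ∈ Bᶜ, ⋃ A ∈ powersetCard p (Bᶜ.erase k),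
    cell r k A B

variable {p a q : ℕ}

theorem volume_iUnion_cell_of_card (hr0 : 0 ≤ r) (hr : r ≤ 1 / 2)
    (hcard : Fintype.card ι = p + a + q + 1) (hB : #B = a) :
    volume (⋃ k ∈ Bᶜ, ⋃ A ∈ powersetCard p (Bᶜ.erase k), cell r k A B)
      = ENNReal.ofReal (r ^ a * (1 - 2 * r) ^ (p + q + 1)) := by
  have hBc : #Bᶜ = p + q + 1 := by
    rw [card_compl, hB, hcard]
    omega
  have hinner : ∀ k ∈ Bᶜ, volume (⋃ A ∈ powersetCard p (Bᶜ.erase k), cell r k A B)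
      = (p + q).choose p * ENNReal.ofReal (r ^ a * (p.factorial * q.factorial
          / (p + q + 1).factorial * (1 - 2 * r) ^ (p + q + 1))) := by
    intro k hk
    rw [mem_compl] at hk
    rw [measure_biUnion_finset_of_forall_eq (c := ENNReal.ofReal _), card_powersetCard,
      card_erase_of_mem (mem_compl.2 hk), hBc, Nat.add_sub_cancel]
    · intro A hA A' hA' hne
      rw [mem_coe, mem_powersetCard] at hA hA'
      exact Set.disjoint_left.2 fun x hx hx' =>
        hne (eq_of_mem_cell_of_mem_cell hr0 hx hx' hk hA.1 hk hA'.1 (by rw [hA.2, hA'.2])).2.1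
    · exact fun _ _ => measurableSet_cell
    · intro A hA
      rw [mem_powersetCard] at hA
      exact volume_cell hr0 hr hk hA.1 hA.2 hB hcard
  rw [measure_biUnion_finset_of_forall_eq (c := _) _ _ hinner, hBc, ← mul_assoc, ← Nat.cast_mul,
    ← ENNReal.ofReal_natCast, ← ENNReal.ofReal_mul (Nat.cast_nonneg _)]
  · congr 1
    linear_combination r ^ a * (1 - 2 * r) ^ (p + q + 1) *
      add_one_mul_choose_mul_factorial_div_factorial p q
  · intro k hk k' hk' hne
    refine Set.disjoint_left.2 fun x hx hx' => hne ?_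
    simp only [Set.mem_iUnion, exists_prop, mem_powersetCard] at hx hx'
    obtain ⟨A, ⟨hA, hAc⟩, hxA⟩ := hx
    obtain ⟨A', ⟨hA', hAc'⟩, hxA'⟩ := hx'
    exact (eq_of_mem_cell_of_mem_cell hr0 hxA hxA' (mem_compl.1 hk) hA (mem_compl.1 hk') hA'
      (by rw [hAc, hAc'])).1
  · exact fun k _ => Finset.measurableSet_biUnion _ fun A _ => measurableSet_cell

theorem volume_cellUnion (hr0 : 0 ≤ r) (hr : r ≤ 1 / 2)
    (hcard : Fintype.card ι = p + a + q + 1) :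
    volume (cellUnion ι r p a)
      = ENNReal.ofReal ((Fintype.card ι).choose a * r ^ a * (1 - 2 * r) ^ (p + q + 1)) := by
  rw [cellUnion, measure_biUnion_finset_of_forall_eq (c := _) _ _
      fun B hB => volume_iUnion_cell_of_card hr0 hr hcard (mem_powersetCard.1 hB).2,
    card_powersetCard, card_univ, ← ENNReal.ofReal_natCast,
    ← ENNReal.ofReal_mul (Nat.cast_nonneg _), mul_assoc]
  · intro B hB B' hB' hne
    refine Set.disjoint_left.2 fun x hx hx' => hne ?_
    simp only [Set.mem_iUnion, exists_prop, mem_powersetCard, mem_compl] at hx hx'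
    obtain ⟨k, hkB, A, ⟨hA, hAc⟩, hxA⟩ := hx
    obtain ⟨k', hkB', A', ⟨hA', hAc'⟩, hxA'⟩ := hx'
    rw [mem_coe, mem_powersetCard] at hB hB'
    exact (eq_of_mem_cell_of_mem_cell hr0 hxA hxA' hkB hA hkB' hA'
      (by rw [hAc, hAc', hB.2, hB'.2])).2.2
  · exact fun B _ => Finset.measurableSet_biUnion _ fun k _ =>
      Finset.measurableSet_biUnion _ fun A _ => measurableSet_cell

end Cells

section Event

variable {n : ℕ} {r : ℝ} {i a : ℕ} {x : Fin n → ℝ} {k : Fin n} {A B : Finset (Fin n)}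

theorem Lcount_eq_of_mem_cell (hr : 0 ≤ r) (hx : x ∈ cell r k A B) (hkB : k ∉ B)
    (hA : A ⊆ Bᶜ.erase k) (hAc : #A = i - 1 - a) (hB : #B = a) (hai : a < i) (hin : i < n) :
    Lcount r x i = a ∧ Lcount r x (i + 1) = 0 := by
  have hdisj : Disjoint A B := subset_compl_iff_disjoint_right.1 (hA.trans (erase_subset _ _))
  have hlt : #{j | x j < x k} = i - 1 := by
    rw [filter_lt_of_mem_cell hr hx hkB hA, card_union_of_disjoint hdisj, hAc, hB]
    omega
  have hXi : ordStat x i = x k := by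
    simpa [hlt, Nat.sub_add_cancel (hai.trans_le' (Nat.zero_le a))] using
      ordStat_card_filter_lt_succ x k
  have hkAB : k ∉ A ∪ B := by simpa [hkB] using fun h => (mem_erase.1 (hA h)).1 rfl
  constructor
  · rw [Lcount_eq_sub_card x hin.le, hXi, filter_lt_sub_of_mem_cell hr hx hkB hA, hAc]
    omega
  · rw [Lcount_succ_eq_zero_iff x (by omega) hin, hXi, filter_le_add_of_mem_cell hr hx hkB hA,
      card_insert_of_notMem hkAB, card_union_of_disjoint hdisj, hAc, hB]
    omega

theorem exists_cell_of_Lcount (hr : 0 ≤ r) (ha : a + 2 ≤ i) (hin : i < n)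
    (hx : Function.Injective x) (hcube : ∀ j, x j ∈ Set.Icc (0 : ℝ) 1)
    (hLi : Lcount r x i = a) (hLi1 : Lcount r x (i + 1) = 0) :
    ∃ B, #B = a ∧ ∃ k ∉ B, ∃ A ⊆ Bᶜ.erase k, #A = i - 1 - a ∧ x ∈ cell r k A B := by
  obtain ⟨k, hk⟩ := exists_eq_ordStat_succ x (m := i - 1) (by omega)
  rw [Nat.sub_add_cancel (by omega)] at hk
  rw [Lcount_eq_sub_card x hin.le, ← hk] at hLi
  rw [Lcount_succ_eq_zero_iff x (by omega) hin, ← hk] at hLi1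
  have hlt : #{j | x j < x k} = i - 1 := by
    simpa [hk, Nat.sub_add_cancel (show 1 ≤ i by omega)] using
      card_lt_ordStat_succ x hx (m := i - 1) (by omega)
  have hAL : ({j | x j < x k - r} : Finset (Fin n)) ⊆ ({j | x j < x k} : Finset (Fin n)) :=
    monotone_filter_right _ fun _ _ h => by linarith
  have hAc : #{j | x j < x k - r} = i - 1 - a := by
    have := card_le_card hAL
    omega
  refine ⟨_, ?_, k, by simp, _, ?_, hAc,
    mem_cell_of_card_filter_le hx hcube (card_pos.1 (by omega)) (by omega) (by simp; omega)⟩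
  · rw [card_sdiff_of_subset hAL, hlt, hAc]
    omega
  · intro j hj
    simp only [mem_filter, mem_univ, true_and] at hj
    simp only [mem_erase, mem_compl, mem_sdiff, mem_filter, mem_univ, true_and, hj]
    exact ⟨fun h => by subst h; linarith, by simp⟩

theorem mem_event_iff_mem_cellUnion (hr : 0 ≤ r) (ha : a + 2 ≤ i) (hin : i < n)
    (hx : Function.Injective x) :
    x ∈ ({x | Lcount r x i = a ∧ Lcount r x (i + 1) = 0} : Set (Fin n → ℝ)) ∩
        Set.univ.pi (fun _ => Set.Icc (0 : ℝ) 1) ↔ x ∈ cellUnion (Fin n) r (i - 1 - a) a := by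
  simp only [cellUnion, Set.mem_inter_iff, Set.mem_ofPred_eq, Set.mem_univ_pi, Set.mem_iUnion,
    exists_prop, mem_powersetCard, mem_compl, subset_univ, true_and, and_assoc]
  constructor
  · rintro ⟨hLi, hLi1, hcube⟩
    exact exists_cell_of_Lcount hr ha hin hx hcube hLi hLi1
  · rintro ⟨B, hB, k, hkB, A, hA, hAc, hxc⟩
    obtain ⟨hLi, hLi1⟩ := Lcount_eq_of_mem_cell hr hxc hkB hA hAc hB (by omega) hin
    exact ⟨hLi, hLi1, mem_Icc_of_mem_cell hr hxc⟩

end Event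

theorem prob_Li_eq_a_and_Lsucc_eq_zero_general (n : ℕ) (r : ℝ) (hr0 : 0 < r) (hr : r < 1 / 2)
    (i a : ℕ) (hin : i ≤ n - 1) (ha : a + 2 ≤ i) :
    (volume.restrict (Set.univ.pi fun _ : Fin n => Set.Icc (0 : ℝ) 1))
        {x : Fin n → ℝ | Lcount r x i = a ∧ Lcount r x (i + 1) = 0}
      = ENNReal.ofReal ((n.choose a : ℝ) * r ^ a * (1 - 2 * r) ^ (n - a)) := by
  have hevent : ({x | Lcount r x i = a ∧ Lcount r x (i + 1) = 0} ∩
      Set.univ.pi (fun _ => Set.Icc (0 : ℝ) 1) : Set (Fin n → ℝ)) =ᵐ[volume]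
      cellUnion (Fin n) r (i - 1 - a) a := by
    filter_upwards [ae_injective] with x hx
    exact propext (mem_event_iff_mem_cellUnion hr0.le ha (by omega) hx)
  rw [Measure.restrict_apply' (MeasurableSet.univ_pi fun _ => measurableSet_Icc),
    measure_congr hevent, volume_cellUnion hr0.le hr.le (q := n - i) (by simp; omega),
    Fintype.card_fin, show i - 1 - a + (n - i) + 1 = n - a by omega]

/-- for i.i.d. uniform points on `[0,1]`, `r < 1/2`, `2 ≤ i ≤ n−1` and
`0 ≤ a ≤ i−2`, the probability that `L_i = a` and `L_{i+1} = 0` equals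
`C(n,a)·r^a·(1−2r)^{n−a}`. -/
theorem prob_Li_eq_a_and_Lsucc_eq_zero (n : ℕ) (r : ℝ) (hr0 : 0 < r) (hr : r < 1 / 2)
    (i a : ℕ) (hi : 2 ≤ i) (hin : i ≤ n - 1) (ha : a + 2 ≤ i) :
    (volume.restrict (Set.univ.pi fun _ : Fin n => Set.Icc (0 : ℝ) 1))
        {x : Fin n → ℝ | Lcount r x i = a ∧ Lcount r x (i + 1) = 0}
      = ENNReal.ofReal ((n.choose a : ℝ) * r ^ a * (1 - 2 * r) ^ (n - a)) :=
  prob_Li_eq_a_and_Lsucc_eq_zero_general n r hr0 hr i a hin ha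
end

section
/- The function f(x) = (2+x)·log₂(2+x) − (1+x)·log₂(1+x) on [−1, ∞) satisfies 2 + x − x² ≤ f(x) ≤ 2 + x for all x ≥ −1, with f strictly increasing and strictly concave, f(0) = 2 and f'(0) = 1. -/
/-!
Here `f' x = log₂ (2 + x) - log₂ (1 + x)` is positive and strictly decreasing, so `f` is
strictly increasing and strictly concave, and the upper bound is the tangent line of `f` at `0`.
For the lower bound, the gap `g x = f x - (2 + x - x²)` vanishes at `-1` and `0`, and
`g' = f' + 2x - 1` is convex because `f'' x = -1 / ((1 + x) (2 + x) ln 2)` increases.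
As `g' (-2/3) < 0 = g' 0`, `g` decreases on `[-2/3, 0]` and increases on `[0, ∞)`;
on `[-1, -2/3]` it is concave since `f'' ≤ -2` there.
-/

open Real Set

theorem ConcaveOn.le_tangent_of_hasDerivAt {S : Set ℝ} {f : ℝ → ℝ} {x y f' : ℝ}
    (hf : ConcaveOn ℝ S f) (hx : x ∈ S) (hy : y ∈ S) (hf' : HasDerivAt f f' x) :
    f y ≤ f x + f' * (y - x) := by
  rcases lt_trichotomy y x with hyx | rfl | hxy
  · have := hf.le_slope_of_hasDerivAt hy hx hyx hf'
    rw [slope_def_field, le_div_iff₀ (sub_pos.2 hyx)] at this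
    linarith
  · simp
  · have := hf.slope_le_of_hasDerivAt hx hy hxy hf'
    rw [slope_def_field, div_le_iff₀ (sub_pos.2 hxy)] at this
    linarith

lemma continuous_mul_logb_const_add (b a : ℝ) :
    Continuous fun y => (a + y) * logb b (a + y) := by
  simp only [logb, ← mul_div_assoc]
  exact (continuous_mul_log.comp (continuous_const_add a)).div_const _

lemma hasDerivAt_logb_const_add {b a x : ℝ} (h : a + x ≠ 0) :
    HasDerivAt (fun y => logb b (a + y)) ((a + x)⁻¹ / log b) x :=
  ((((hasDerivAt_id' x).const_add a).log h).div_const (log b)).congr_deriv (by simp)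

lemma hasDerivAt_mul_logb_const_add {b a x : ℝ} (hb : log b ≠ 0) (h : a + x ≠ 0) :
    HasDerivAt (fun y => (a + y) * logb b (a + y)) (logb b (a + x) + (log b)⁻¹) x := by
  refine (((hasDerivAt_id' x).const_add a).mul (hasDerivAt_logb_const_add h)).congr_deriv ?_
  field_simp

noncomputable def geomEntropy (x : ℝ) : ℝ :=
  (2 + x) * logb 2 (2 + x) - (1 + x) * logb 2 (1 + x)

noncomputable def geomEntropyDeriv (x : ℝ) : ℝ :=
  logb 2 (2 + x) - logb 2 (1 + x)

lemma continuous_geomEntropy : Continuous geomEntropy :=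
  (continuous_mul_logb_const_add 2 2).sub (continuous_mul_logb_const_add 2 1)

lemma hasDerivAt_geomEntropy {x : ℝ} (hx : -1 < x) :
    HasDerivAt geomEntropy (geomEntropyDeriv x) x := by
  have hlog : log 2 ≠ 0 := (log_pos one_lt_two).ne'
  refine ((hasDerivAt_mul_logb_const_add hlog (a := 2) (by linarith)).sub
    (hasDerivAt_mul_logb_const_add hlog (a := 1) (x := x) (by linarith))).congr_deriv ?_
  rw [geomEntropyDeriv]
  ring

lemma hasDerivAt_geomEntropyDeriv {x : ℝ} (hx : -1 < x) :
    HasDerivAt geomEntropyDeriv (-((1 + x) * (2 + x) * log 2)⁻¹) x := by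
  refine ((hasDerivAt_logb_const_add (b := 2) (a := 2) (by linarith)).sub
    (hasDerivAt_logb_const_add (b := 2) (a := 1) (x := x) (by linarith))).congr_deriv ?_
  have h1 : 1 + x ≠ 0 := by linarith
  have h2 : 2 + x ≠ 0 := by linarith
  field_simp
  ring

lemma geomEntropy_zero : geomEntropy 0 = 2 := by
  norm_num [geomEntropy, logb_self_eq_one]

lemma geomEntropyDeriv_zero : geomEntropyDeriv 0 = 1 := by
  norm_num [geomEntropyDeriv, logb_self_eq_one]

lemma geomEntropyDeriv_neg_two_thirds : geomEntropyDeriv (-2 / 3) = 2 := by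
  rw [geomEntropyDeriv, ← logb_div (by norm_num) (by norm_num),
    show (2 + -2 / 3) / (1 + -2 / 3 : ℝ) = 2 ^ (2 : ℝ) by norm_num,
    logb_rpow two_pos one_lt_two.ne']

lemma geomEntropyDeriv_pos {x : ℝ} (hx : -1 < x) : 0 < geomEntropyDeriv x :=
  sub_pos.2 (logb_lt_logb one_lt_two (by linarith) (by linarith))

lemma strictMonoOn_geomEntropy : StrictMonoOn geomEntropy (Ici (-1)) :=
  strictMonoOn_of_hasDerivWithinAt_pos (convex_Ici _) continuous_geomEntropy.continuousOn
    (fun _ hx ↦ (hasDerivAt_geomEntropy (by simpa using hx)).hasDerivWithinAt)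
    (fun _ hx ↦ geomEntropyDeriv_pos (by simpa using hx))

lemma strictAntiOn_geomEntropyDeriv : StrictAntiOn geomEntropyDeriv (Ioi (-1)) := by
  refine strictAntiOn_of_hasDerivWithinAt_neg (convex_Ioi _)
    (fun x hx ↦ (hasDerivAt_geomEntropyDeriv hx).continuousAt.continuousWithinAt)
    (fun x hx ↦ (hasDerivAt_geomEntropyDeriv (by simpa using hx)).hasDerivWithinAt)
    (fun x hx ↦ ?_)
  have hx : -1 < x := by simpa using hx
  exact neg_neg_of_pos (inv_pos.2 (mul_pos (mul_pos (by linarith) (by linarith))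
    (log_pos one_lt_two)))

lemma strictConcaveOn_geomEntropy : StrictConcaveOn ℝ (Ici (-1)) geomEntropy := by
  refine StrictAntiOn.strictConcaveOn_of_deriv (convex_Ici _)
    continuous_geomEntropy.continuousOn ?_
  rw [interior_Ici]
  exact strictAntiOn_geomEntropyDeriv.congr fun x hx ↦ (hasDerivAt_geomEntropy hx).deriv.symm

lemma geomEntropy_le {x : ℝ} (hx : -1 ≤ x) : geomEntropy x ≤ 2 + x := by
  have := strictConcaveOn_geomEntropy.concaveOn.le_tangent_of_hasDerivAt
    (show (0 : ℝ) ∈ Ici (-1) by norm_num) hx (hasDerivAt_geomEntropy (by norm_num))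
  rwa [geomEntropy_zero, geomEntropyDeriv_zero, one_mul, sub_zero] at this

lemma convexOn_geomEntropyDeriv_add_two_mul :
    ConvexOn ℝ (Ioi (-1)) fun x ↦ geomEntropyDeriv x + 2 * x := by
  refine (MonotoneOn.convexOn_of_deriv (convex_Ioi _)
    (fun x hx ↦ (hasDerivAt_geomEntropyDeriv hx).continuousAt.continuousWithinAt)
    (fun x hx ↦ (hasDerivAt_geomEntropyDeriv (by simpa using hx)).differentiableAt
      |>.differentiableWithinAt) ?_).add ((LinearMap.mul ℝ ℝ 2).convexOn (convex_Ioi _))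
  rw [interior_Ioi]
  intro x (hx : -1 < x) y (hy : -1 < y) hxy
  rw [(hasDerivAt_geomEntropyDeriv hx).deriv, (hasDerivAt_geomEntropyDeriv hy).deriv,
    neg_le_neg_iff]
  have hlog := log_pos one_lt_two
  refine inv_anti₀ (mul_pos (mul_pos (by linarith) (by linarith)) hlog) ?_
  exact mul_le_mul_of_nonneg_right
    (mul_le_mul (by linarith) (by linarith) (by linarith) (by linarith)) hlog.le

lemma geomEntropyDeriv_add_two_mul_le_one {x : ℝ} (hx : x ∈ Icc (-2 / 3) 0) :
    geomEntropyDeriv x + 2 * x ≤ 1 := by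
  have := convexOn_geomEntropyDeriv_add_two_mul.le_on_segment (x := -2 / 3) (y := 0)
    (by norm_num) (by norm_num) (by rwa [segment_eq_Icc (by norm_num)])
  rw [geomEntropyDeriv_zero, geomEntropyDeriv_neg_two_thirds] at this
  norm_num at this
  exact this

lemma one_le_geomEntropyDeriv_add_two_mul {x : ℝ} (hx : 0 ≤ x) :
    1 ≤ geomEntropyDeriv x + 2 * x := by
  have := convexOn_geomEntropyDeriv_add_two_mul.le_right_of_left_le'' (x := -2 / 3) (y := 0)
    (by norm_num) (mem_Ioi.2 (by linarith)) (by norm_num) hx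
    (by rw [geomEntropyDeriv_zero, geomEntropyDeriv_neg_two_thirds]; norm_num)
  simpa [geomEntropyDeriv_zero] using this

noncomputable def geomEntropyGap (x : ℝ) : ℝ :=
  geomEntropy x - (2 + x - x ^ 2)

lemma continuous_geomEntropyGap : Continuous geomEntropyGap :=
  continuous_geomEntropy.sub (by fun_prop)

lemma hasDerivAt_geomEntropyGap {x : ℝ} (hx : -1 < x) :
    HasDerivAt geomEntropyGap (geomEntropyDeriv x + 2 * x - 1) x := by
  refine ((hasDerivAt_geomEntropy hx).sub
    (((hasDerivAt_id' x).const_add 2).sub (hasDerivAt_pow 2 x))).congr_deriv ?_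
  ring

lemma geomEntropyGap_neg_one : geomEntropyGap (-1) = 0 := by
  norm_num [geomEntropyGap, geomEntropy]

lemma geomEntropyGap_zero : geomEntropyGap 0 = 0 := by
  simp [geomEntropyGap, geomEntropy_zero]

lemma monotoneOn_geomEntropyGap : MonotoneOn geomEntropyGap (Ici 0) := by
  refine monotoneOn_of_hasDerivWithinAt_nonneg (convex_Ici _)
    continuous_geomEntropyGap.continuousOn
    (fun x hx ↦ (hasDerivAt_geomEntropyGap (by simp at hx; linarith)).hasDerivWithinAt)
    (fun x hx ↦ ?_)
  rw [interior_Ici] at hx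
  linarith [one_le_geomEntropyDeriv_add_two_mul (le_of_lt hx)]

lemma antitoneOn_geomEntropyGap : AntitoneOn geomEntropyGap (Icc (-2 / 3) 0) := by
  refine antitoneOn_of_hasDerivWithinAt_nonpos (convex_Icc _ _)
    continuous_geomEntropyGap.continuousOn
    (fun x hx ↦ (hasDerivAt_geomEntropyGap (by simp at hx; linarith)).hasDerivWithinAt)
    (fun x hx ↦ ?_)
  rw [interior_Icc] at hx
  linarith [geomEntropyDeriv_add_two_mul_le_one (Ioo_subset_Icc_self hx)]

lemma concaveOn_geomEntropyGap : ConcaveOn ℝ (Icc (-1) (-2 / 3)) geomEntropyGap := by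
  refine concaveOn_of_hasDerivWithinAt2_nonpos (convex_Icc _ _)
    continuous_geomEntropyGap.continuousOn
    (fun x hx ↦ (hasDerivAt_geomEntropyGap (by simp at hx; linarith)).hasDerivWithinAt)
    (fun x hx ↦ (((hasDerivAt_geomEntropyDeriv (by simp at hx; linarith)).add
      ((hasDerivAt_id' x).const_mul 2)).sub_const 1).hasDerivWithinAt)
    (fun x hx ↦ ?_)
  rw [interior_Icc] at hx
  obtain ⟨h1, h2⟩ := hx
  have hpos : 0 < (1 + x) * (2 + x) * log 2 :=
    mul_pos (mul_pos (by linarith) (by linarith)) (log_pos one_lt_two)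
  have : 2 ≤ ((1 + x) * (2 + x) * log 2)⁻¹ := by
    have hprod : (1 + x) * (2 + x) ≤ 4 / 9 := by nlinarith
    have hlog : log 2 < 1 := log_two_lt_d9.trans (by norm_num)
    rw [le_inv_comm₀ two_pos hpos]
    nlinarith [mul_le_mul hprod hlog.le (log_pos one_lt_two).le (by norm_num)]
  linarith

lemma geomEntropyGap_nonneg {x : ℝ} (hx : -1 ≤ x) : 0 ≤ geomEntropyGap x := by
  have hmid : ∀ y ∈ Icc (-2 / 3 : ℝ) 0, 0 ≤ geomEntropyGap y := fun y hy ↦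
    geomEntropyGap_zero ▸ antitoneOn_geomEntropyGap hy ⟨by norm_num, le_rfl⟩ hy.2
  rcases le_total 0 x with h0 | h0
  · exact geomEntropyGap_zero ▸ monotoneOn_geomEntropyGap self_mem_Ici h0 h0
  rcases le_total (-2 / 3) x with h1 | h1
  · exact hmid x ⟨h1, h0⟩
  have := concaveOn_geomEntropyGap.ge_on_segment (left_mem_Icc.2 (by norm_num))
    (right_mem_Icc.2 (by norm_num)) (by rw [segment_eq_Icc (by norm_num)]; exact ⟨hx, h1⟩)
  rw [geomEntropyGap_neg_one] at this
  exact (le_min le_rfl (hmid _ ⟨le_rfl, by norm_num⟩)).trans this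

/-- the function `f(x) = (2+x)·log₂(2+x) − (1+x)·log₂(1+x)` on `[−1,∞)`
satisfies `2 + x − x² ≤ f(x) ≤ 2 + x`, is strictly increasing and strictly concave on
`[−1,∞)`, and satisfies `f(0) = 2` and `f'(0) = 1`. -/
theorem geometric_entropy_function_properties :
    let f : ℝ → ℝ := fun x => (2 + x) * Real.logb 2 (2 + x) - (1 + x) * Real.logb 2 (1 + x)
    (∀ x : ℝ, -1 ≤ x → 2 + x - x ^ 2 ≤ f x ∧ f x ≤ 2 + x) ∧
    StrictMonoOn f (Set.Ici (-1 : ℝ)) ∧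
    StrictConcaveOn ℝ (Set.Ici (-1 : ℝ)) f ∧
    f 0 = 2 ∧ deriv f 0 = 1 := by
  refine ⟨fun x hx ↦ ⟨sub_nonneg.1 (geomEntropyGap_nonneg hx), geomEntropy_le hx⟩,
    strictMonoOn_geomEntropy, strictConcaveOn_geomEntropy, geomEntropy_zero, ?_⟩
  exact (hasDerivAt_geomEntropy (by norm_num)).deriv.trans geomEntropyDeriv_zero
end
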